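/- arXiv:2105.07439 — 11 statements merged into one kernel-verified Lean document; each statement's English description precedes it below -/
import Mathlib

section
/- Let ψ : V → V be a bijective τ-semilinear map over F, for some field automorphism τ of F, such that ψ maps each subspace in the set S = {J(∞)} ∪ {J(k) : k ∈ K} onto a subspace in S. Then there exist a, b, c, d ∈ K with a·d − b·c ≠ 0 and a field automorphism ρ of K such that ψ(x, y) = (a·ρ(x) + c·ρ(y), b·ρ(x) + d·ρ(y)) for all x, y ∈ K. -/
def Jinf (K : Type) [Field K] : Set (K × K) := {p | p.2 = 0}

def J (K : Type) [Field K] (k : K) : Set (K × K) := {p | p.1 = k * p.2}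

/-!
The members of `S` are exactly the `K`-lines `K • p` with `p ≠ 0`, so an injective additive map
preserving `S` sends the line through `p` onto the line through `ψ p`. In particular the lines
`ψ (J(∞))` and `ψ (J(0))` are distinct, so the `K`-linear map `N` with `N (1,0) = ψ (1,0)` and
`N (0,1) = ψ (0,1)` is invertible, and `φ = N⁻¹ ∘ ψ` still preserves `S` while fixing `J(∞)` and `J(0)`.
Hence `φ (x, y) = (σ x, μ y)` with `σ`, `μ` additive, and `φ (J(k)) = J(σ k)` reads
`σ (k * y) = σ k * μ y`; taking `k = 1` gives `μ = σ`, so `σ` is a field automorphism.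
-/

open Function

namespace DesarguesianSpread

variable {K : Type} [Field K]

variable (K) in
def spread : Set (Set (K × K)) := insert (Jinf K) {W | ∃ k : K, W = J K k}

def line (p : K × K) : Set (K × K) := Set.range fun t : K => t • p

def PreservesSpread (φ : K × K → K × K) : Prop := ∀ W ∈ spread K, φ '' W ∈ spread K

theorem Jinf_eq_line : Jinf K = line (1, 0) := by
  ext ⟨x, y⟩
  simp [Jinf, line, Prod.ext_iff, eq_comm]

theorem J_eq_line (k : K) : J K k = line (k, 1) := by
  ext ⟨x, y⟩
  simp [J, line, Prod.ext_iff, eq_comm, mul_comm]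

theorem line_smul {s : K} (hs : s ≠ 0) (p : K × K) : line (s • p) = line p := by
  ext w
  simp only [line, Set.mem_range, smul_smul]
  constructor
  · rintro ⟨t, rfl⟩
    exact ⟨t * s, rfl⟩
  · rintro ⟨t, rfl⟩
    exact ⟨t * s⁻¹, by rw [mul_assoc, inv_mul_cancel₀ hs, mul_one]⟩

theorem line_mem_spread {p : K × K} (hp : p ≠ 0) : line p ∈ spread K := by
  by_cases h2 : p.2 = 0
  · have h1 : p.1 ≠ 0 := fun h1 => hp (Prod.ext h1 h2)
    have hp' : p = p.1 • ((1 : K), (0 : K)) := by ext <;> simp [h2]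
    rw [hp', line_smul h1, ← Jinf_eq_line]
    exact Set.mem_insert _ _
  · have hp' : p = p.2 • (p.1 / p.2, (1 : K)) := by ext <;> simp [mul_div_cancel₀ _ h2]
    rw [hp', line_smul h2, ← J_eq_line]
    exact Set.mem_insert_of_mem _ ⟨_, rfl⟩

theorem exists_eq_line_of_mem_spread {W : Set (K × K)} (hW : W ∈ spread K) :
    ∃ p ≠ 0, W = line p := by
  rcases hW with rfl | ⟨k, rfl⟩
  · exact ⟨(1, 0), by simp, Jinf_eq_line⟩
  · exact ⟨(k, 1), by simp, J_eq_line k⟩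

theorem eq_line_of_mem_spread {W : Set (K × K)} (hW : W ∈ spread K) {p : K × K} (hpW : p ∈ W)
    (hp : p ≠ 0) : W = line p := by
  obtain ⟨w, -, rfl⟩ := exists_eq_line_of_mem_spread hW
  obtain ⟨s, rfl⟩ := hpW
  have hs : s ≠ 0 := by
    rintro rfl
    exact hp (zero_smul K w)
  exact (line_smul hs w).symm

theorem PreservesSpread.comp {f g : K × K → K × K} (hg : PreservesSpread g)
    (hf : PreservesSpread f) : PreservesSpread (g ∘ f) := fun W hW => by
  rw [Set.image_comp]
  exact hg _ (hf W hW)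

theorem _root_.LinearEquiv.preservesSpread (f : (K × K) ≃ₗ[K] (K × K)) : PreservesSpread f := by
  intro W hW
  obtain ⟨p, hp, rfl⟩ := exists_eq_line_of_mem_spread hW
  have hfp : f '' line p = line (f p) := by
    simp only [line, ← Set.range_comp, comp_def, map_smul]
  rw [hfp]
  exact line_mem_spread ((LinearEquiv.map_ne_zero_iff f).2 hp)

theorem mem_line_of_det_eq_zero {u v : K × K} (hu : u ≠ 0) (h : u.1 * v.2 - u.2 * v.1 = 0) :
    v ∈ line u := by
  by_cases h1 : u.1 = 0
  · have h2 : u.2 ≠ 0 := fun h2 => hu (Prod.ext h1 h2)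
    have hv1 : v.1 = 0 := by simpa [h1, h2] using h
    exact ⟨v.2 / u.2, by ext <;> simp [h1, hv1, h2]⟩
  · refine ⟨v.1 / u.1, ?_⟩
    ext
    · simp [h1]
    · simp only [Prod.smul_snd, smul_eq_mul]
      field_simp
      linear_combination -h

def pairMap (u v : K × K) : K × K →ₗ[K] K × K :=
  (LinearMap.fst K K K).smulRight u + (LinearMap.snd K K K).smulRight v

theorem pairMap_apply (u v p : K × K) : pairMap u v p = p.1 • u + p.2 • v := rfl

theorem pairMap_injective {u v : K × K} (h : u.1 * v.2 - u.2 * v.1 ≠ 0) :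
    Injective (pairMap u v) := by
  rw [← LinearMap.ker_eq_bot, LinearMap.ker_eq_bot']
  intro p hp
  simp only [pairMap_apply, Prod.ext_iff, Prod.fst_add, Prod.snd_add, Prod.smul_fst,
    Prod.smul_snd, smul_eq_mul, Prod.fst_zero, Prod.snd_zero] at hp
  obtain ⟨h1, h2⟩ := hp
  ext
  · exact (mul_eq_zero.1 (by linear_combination v.2 * h1 - v.1 * h2 : p.1 * _ = 0)).resolve_right h
  · exact (mul_eq_zero.1 (by linear_combination u.1 * h2 - u.2 * h1 : p.2 * _ = 0)).resolve_right h

section AddMonoidHom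

variable {F : Type*} [FunLike F (K × K) (K × K)] [AddMonoidHomClass F (K × K) (K × K)] {φ : F}

theorem PreservesSpread.image_line (hφ : PreservesSpread φ) (hinj : Injective φ) {p : K × K}
    (hp : p ≠ 0) : φ '' line p = line (φ p) :=
  eq_line_of_mem_spread (hφ _ (line_mem_spread hp)) ⟨p, ⟨1, one_smul K p⟩, rfl⟩
    ((map_ne_zero_iff φ hinj).2 hp)

theorem PreservesSpread.map_smul_mem_line (hφ : PreservesSpread φ) (hinj : Injective φ)
    {p : K × K} (hp : p ≠ 0) (t : K) : φ (t • p) ∈ line (φ p) :=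
  hφ.image_line hinj hp ▸ Set.mem_image_of_mem φ ⟨t, rfl⟩

theorem PreservesSpread.det_ne_zero (hφ : PreservesSpread φ) (hinj : Injective φ) :
    (φ (1, 0)).1 * (φ (0, 1)).2 - (φ (1, 0)).2 * (φ (0, 1)).1 ≠ 0 := by
  intro h
  have hu : φ (1, 0) ≠ 0 := (map_ne_zero_iff φ hinj).2 (by simp)
  obtain ⟨_, ⟨t, rfl⟩, hφt⟩ : φ (0, 1) ∈ φ '' line (1, 0) :=
    hφ.image_line hinj (p := (1, 0)) (by simp) ▸ mem_line_of_det_eq_zero hu h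
  simpa using congrArg Prod.snd (hinj hφt)

theorem PreservesSpread.map_eq_of_fix (hφ : PreservesSpread φ) (hinj : Injective φ)
    (h10 : φ (1, 0) = (1, 0)) (h01 : φ (0, 1) = (0, 1)) (x y : K) :
    φ (x, y) = ((φ (x, 0)).1, (φ (0, y)).2) := by
  have hx : (φ (x, 0)).2 = 0 := by
    simpa [h10, ← Jinf_eq_line, Jinf] using
      hφ.map_smul_mem_line hinj (p := (1, 0)) (by simp) x
  have hy : (φ (0, y)).1 = 0 := by
    simpa [h01, ← J_eq_line, J] using hφ.map_smul_mem_line hinj (p := (0, 1)) (by simp) y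
  rw [show ((x, y) : K × K) = (x, 0) + (0, y) by simp, map_add]
  ext <;> simp [hx, hy]

theorem PreservesSpread.map_mul_of_fix (hφ : PreservesSpread φ) (hinj : Injective φ)
    (h10 : φ (1, 0) = (1, 0)) (h01 : φ (0, 1) = (0, 1)) (k y : K) :
    (φ (k * y, 0)).1 = (φ (k, 0)).1 * (φ (0, y)).2 := by
  have hk : φ (k, 1) = ((φ (k, 0)).1, 1) := by
    rw [hφ.map_eq_of_fix hinj h10 h01, h01]
  have := hφ.map_smul_mem_line hinj (p := (k, 1)) (by simp) y
  rw [hk, ← J_eq_line, Prod.smul_mk, smul_eq_mul, smul_eq_mul, mul_one, mul_comm y k,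
    hφ.map_eq_of_fix hinj h10 h01 (k * y) y] at this
  exact this

end AddMonoidHom

theorem PreservesSpread.exists_ringEquiv_of_fix {φ : K × K ≃+ K × K} (hφ : PreservesSpread φ)
    (h10 : φ (1, 0) = (1, 0)) (h01 : φ (0, 1) = (0, 1)) :
    ∃ ρ : K ≃+* K, ∀ x y, φ (x, y) = (ρ x, ρ y) := by
  let σ : K →+ K := (AddMonoidHom.fst K K).comp ((φ : K × K →+ K × K).comp (AddMonoidHom.inl K K))
  have hσ : ∀ x, σ x = (φ (x, 0)).1 := fun _ => rfl
  have hσ1 : σ 1 = 1 := by rw [hσ, h10]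
  have hμ : ∀ y, (φ (0, y)).2 = σ y := fun y => by
    simpa [← hσ, hσ1] using (hφ.map_mul_of_fix φ.injective h10 h01 1 y).symm
  have hφσ : ∀ x y, φ (x, y) = (σ x, σ y) := fun x y => by
    rw [hφ.map_eq_of_fix φ.injective h10 h01 x y, hμ]
    rfl
  let ρ : K →+* K :=
    { σ with
      map_one' := hσ1
      map_mul' := fun k y => by
        simpa [← hσ, hμ] using hφ.map_mul_of_fix φ.injective h10 h01 k y }
  have hρ : Surjective ρ := fun z => by
    obtain ⟨p, hp⟩ := φ.surjective (z, 0)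
    rw [hφσ] at hp
    exact ⟨p.1, congrArg Prod.fst hp⟩
  exact ⟨RingEquiv.ofBijective ρ ⟨ρ.injective, hρ⟩, hφσ⟩

theorem PreservesSpread.exists_ringEquiv {ψ : K × K ≃+ K × K} (hψ : PreservesSpread ψ) :
    ∃ ρ : K ≃+* K, ∀ x y, ψ (x, y) = ρ x • ψ (1, 0) + ρ y • ψ (0, 1) := by
  let N := LinearEquiv.ofInjectiveEndo _ (pairMap_injective (hψ.det_ne_zero ψ.injective))
  have hN : ∀ p, N p = p.1 • ψ (1, 0) + p.2 • ψ (0, 1) := fun _ => rfl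
  let φ := ψ.trans N.symm.toAddEquiv
  have hφ : ∀ p, φ p = N.symm (ψ p) := fun _ => rfl
  have h10 : φ (1, 0) = (1, 0) := by rw [hφ, N.symm_apply_eq, hN]; simp
  have h01 : φ (0, 1) = (0, 1) := by rw [hφ, N.symm_apply_eq, hN]; simp
  obtain ⟨ρ, hρ⟩ := (N.symm.preservesSpread.comp hψ).exists_ringEquiv_of_fix h10 h01
  refine ⟨ρ, fun x y => ?_⟩
  calc ψ (x, y) = N (φ (x, y)) := (N.apply_symm_apply _).symm
    _ = _ := by rw [hρ, hN]

end DesarguesianSpread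

theorem stmt_0_general
    (K : Type) [Field K] (ψ : K × K → K × K)
    (hbij : Function.Bijective ψ)
    (hadd : ∀ u v : K × K, ψ (u + v) = ψ u + ψ v)
    (hS : ∀ W ∈ (insert (Jinf K) {W | ∃ k : K, W = J K k} : Set (Set (K × K))),
      ψ '' W ∈ (insert (Jinf K) {W | ∃ k : K, W = J K k} : Set (Set (K × K)))) :
    ∃ (a b c d : K) (ρ : K ≃+* K), a * d - b * c ≠ 0 ∧
      ∀ x y : K, ψ (x, y) = (a * ρ x + c * ρ y, b * ρ x + d * ρ y) := by
  let ψ' : K × K ≃+ K × K := AddEquiv.ofBijective (AddMonoidHom.mk' ψ hadd) hbij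
  have hψ : DesarguesianSpread.PreservesSpread ψ' := hS
  have hdet := hψ.det_ne_zero ψ'.injective
  obtain ⟨ρ, hρ⟩ := hψ.exists_ringEquiv
  rw [show ⇑ψ' = ψ from rfl] at hdet hρ
  refine ⟨_, _, _, _, ρ, hdet, fun x y => ?_⟩
  rw [hρ]
  ext <;> simp [mul_comm]

theorem stmt_0
    (q n : ℕ) (hq : 2 < q) (hqp : IsPrimePow q) (hn : 1 ≤ n)
    (F K : Type) [Field F] [Field K] [Algebra F K] [Fintype F] [Fintype K]
    (hcF : Fintype.card F = q) (hcK : Fintype.card K = q ^ (n + 1))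
    (τ : F ≃+* F) (ψ : K × K → K × K)
    (hbij : Function.Bijective ψ)
    (hadd : ∀ u v : K × K, ψ (u + v) = ψ u + ψ v)
    (hsem : ∀ (f : F) (v : K × K), ψ (f • v) = τ f • ψ v)
    (hS : ∀ W ∈ (insert (Jinf K) {W | ∃ k : K, W = J K k} : Set (Set (K × K))),
      ψ '' W ∈ (insert (Jinf K) {W | ∃ k : K, W = J K k} : Set (Set (K × K)))) :
    ∃ (a b c d : K) (ρ : K ≃+* K), a * d - b * c ≠ 0 ∧
      ∀ x y : K, ψ (x, y) = (a * ρ x + c * ρ y, b * ρ x + d * ρ y) :=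
  stmt_0_general K ψ hbij hadd hS
end

section
/- Assume (n, q) ≠ (1, 3). Let ψ : V → V be a bijective τ-semilinear map over F, for some field automorphism τ of F, such that for every f ∈ F∖{0} there exists f′ ∈ F∖{0} with {ψ(J(k)) : k ∈ K, N(k) = f} = {J(k′) : k′ ∈ K, N(k′) = f′} (that is, ψ permutes the norm surfaces of the linear set L = {J_f : f ∈ F∖{0}}, where J_f = {J(k) : N(k) = f}). Then there exists a field automorphism ρ of K such that either there exist a, d ∈ K∖{0} with ψ(x, y) = (a·ρ(x), d·ρ(y)) for all x, y ∈ K, or there exist b, c ∈ K∖{0} with ψ(x, y) = (c·ρ(y), b·ρ(x)) for all x, y ∈ K. -/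
open Set Function

theorem AddMonoidHom.forall_snd_eq_zero_or_forall_fst_eq_zero {M A B : Type*} [AddZeroClass M]
    [AddZeroClass A] [AddZeroClass B] (φ : M →+ A × B) (h : ∀ x, (φ x).1 = 0 ∨ (φ x).2 = 0) :
    (∀ x, (φ x).2 = 0) ∨ ∀ x, (φ x).1 = 0 := by
  by_contra! ⟨⟨x, hx⟩, ⟨y, hy⟩⟩
  have hx₁ := (h x).resolve_right hx
  have hy₂ := (h y).resolve_left hy
  rcases h (x + y) with hxy | hxy <;> simp_all

theorem AddMonoidHom.map_prodMk_eq_add {A B C : Type*} [AddZeroClass A] [AddZeroClass B]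
    [AddZeroClass C] (φ : A × B →+ C) (x : A) (y : B) : φ (x, y) = φ (x, 0) + φ (0, y) := by
  rw [← map_add, Prod.mk_add_mk, add_zero, zero_add]

theorem AddMonoidHom.preserves_or_swaps_axes {A B C D : Type*} [AddZeroClass A] [AddZeroClass B]
    [AddZeroClass C] [AddZeroClass D] [Nontrivial C] [Nontrivial D] (φ : A × B →+ C × D)
    (hφ : Surjective φ) (haxes : ∀ v, v.1 = 0 ∨ v.2 = 0 → (φ v).1 = 0 ∨ (φ v).2 = 0) :
    ((∀ x, (φ (x, 0)).2 = 0) ∧ ∀ y, (φ (0, y)).1 = 0) ∨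
      ((∀ x, (φ (x, 0)).1 = 0) ∧ ∀ y, (φ (0, y)).2 = 0) := by
  rcases (φ.comp (inl A B)).forall_snd_eq_zero_or_forall_fst_eq_zero
    fun x => haxes (x, 0) (.inr rfl) with h₁ | h₁ <;>
  rcases (φ.comp (inr A B)).forall_snd_eq_zero_or_forall_fst_eq_zero
    fun y => haxes (0, y) (.inl rfl) with h₂ | h₂
  · obtain ⟨d, hd⟩ := exists_ne (0 : D)
    obtain ⟨⟨x, y⟩, hxy⟩ := hφ (0, d)
    have h := congrArg Prod.snd (φ.map_prodMk_eq_add x y)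
    simp_all
  · exact .inl ⟨h₁, h₂⟩
  · exact .inr ⟨h₁, h₂⟩
  · obtain ⟨c, hc⟩ := exists_ne (0 : C)
    obtain ⟨⟨x, y⟩, hxy⟩ := hφ (c, 0)
    have h := congrArg Prod.fst (φ.map_prodMk_eq_add x y)
    simp_all

section Slopes

variable {K : Type} [Field K]

theorem mem_J_div {v : K × K} (hv : v.2 ≠ 0) : v ∈ J K (v.1 / v.2) := by
  simp [J, div_mul_cancel₀ _ hv]

theorem mapsTo_swap_J {k : K} (hk : k ≠ 0) : MapsTo Prod.swap (J K k) (J K k⁻¹) := by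
  intro v hv
  simp only [J, mem_ofPred_eq, Prod.fst_swap, Prod.snd_swap] at hv ⊢
  rw [hv, inv_mul_cancel_left₀ hk]

theorem fst_ne_zero_and_snd_ne_zero_of_mem_J {k : K} (hk : k ≠ 0) {v : K × K} (hv : v ∈ J K k)
    (hv₀ : v ≠ 0) : v.1 ≠ 0 ∧ v.2 ≠ 0 := by
  have hv : v.1 = k * v.2 := hv
  refine ⟨fun h₁ => hv₀ ?_, fun h₂ => hv₀ ?_⟩ <;> ext <;> simp_all

theorem exists_mapsTo_J_of_image_normSurfaces {F : Type} [Field F] [Algebra F K] [Finite K]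
    (ψ : K × K → K × K)
    (hL : ∀ f : F, f ≠ 0 → ∃ f' : F, f' ≠ 0 ∧
      (fun W => ψ '' W) '' {W | ∃ k : K, Algebra.norm F k = f ∧ W = J K k}
        = {W | ∃ k' : K, Algebra.norm F k' = f' ∧ W = J K k'})
    (k : K) (hk : k ≠ 0) : ∃ k' ≠ 0, MapsTo ψ (J K k) (J K k') := by
  obtain ⟨f', hf', hL⟩ := hL _ ((Ne.isUnit hk).map (Algebra.norm F)).ne_zero
  obtain ⟨k', hk'f', hk'⟩ : ψ '' J K k ∈ {W | ∃ k' : K, Algebra.norm F k' = f' ∧ W = J K k'} :=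
    hL ▸ ⟨J K k, ⟨k, rfl, rfl⟩, rfl⟩
  refine ⟨k', ?_, mapsTo_iff_image_subset.mpr hk'.subset⟩
  rintro rfl
  have : Module.Finite F K := .of_finite
  exact hf' (hk'f' ▸ Algebra.norm_zero)

theorem exists_ringEquiv_of_map_mul_eq [Finite K] (α : K →+ K) (δ : K → K) (hα : α 1 ≠ 0)
    (h : ∀ k ≠ 0, ∃ k', ∀ z, α (k * z) = k' * δ z) :
    ∃ ρ : K ≃+* K, (∀ x, α x = α 1 * ρ x) ∧ ∀ y, δ y = δ 1 * ρ y := by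
  obtain ⟨c, hc⟩ := h 1 one_ne_zero
  simp only [one_mul] at hc
  obtain ⟨hc₀, hδ₁⟩ := mul_ne_zero_iff.mp (hc 1 ▸ hα)
  have hmul (k z : K) : α (k * z) * α 1 = α k * α z := by
    rcases eq_or_ne k 0 with rfl | hk
    · simp
    obtain ⟨k', hk'⟩ := h k hk
    have hk'₁ := hk' 1
    rw [mul_one] at hk'₁
    rw [hk' z, hk'₁, hc 1, hc z]
    ring
  let ρ : K →+* K :=
    { toFun x := α x / α 1
      map_one' := div_self hα
      map_mul' x y := by
        rw [div_mul_div_comm, ← hmul, mul_div_mul_right _ _ hα]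
      map_zero' := by simp
      map_add' x y := by rw [map_add, add_div] }
  refine ⟨.ofBijective ρ ⟨ρ.injective, Finite.surjective_of_injective ρ.injective⟩,
    fun x => (mul_div_cancel₀ _ hα).symm, fun y => ?_⟩
  change δ y = δ 1 * (α y / α 1)
  rw [hc y, hc 1]
  field_simp

variable (ψ : K × K →+ K × K)

theorem mapsTo_axes_of_mapsTo_J [Finite K] (hψ : Injective ψ)
    (hJ : ∀ k ≠ 0, ∃ k' ≠ 0, MapsTo ψ (J K k) (J K k'))
    (v : K × K) (hv : v.1 = 0 ∨ v.2 = 0) : (ψ v).1 = 0 ∨ (ψ v).2 = 0 := by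
  have hoff : MapsTo ψ {v | v.1 ≠ 0 ∧ v.2 ≠ 0} {v | v.1 ≠ 0 ∧ v.2 ≠ 0} := by
    rintro v ⟨h₁, h₂⟩
    obtain ⟨k', hk', hmaps⟩ := hJ _ (div_ne_zero h₁ h₂)
    exact fst_ne_zero_and_snd_ne_zero_of_mem_J hk' (hmaps (mem_J_div h₂))
      ((map_ne_zero_iff ψ hψ).mpr fun h => h₁ (by simp [h]))
  have haxes :=
    (((toFinite _).injOn_iff_bijOn_of_mapsTo hoff).mp hψ.injOn).surjOn.mapsTo_compl hψ
  simpa only [mem_compl_iff, mem_ofPred_eq, not_and_or, not_not] using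
    haxes fun ⟨h₁, h₂⟩ => hv.elim h₁ h₂

theorem exists_ringEquiv_of_mapsTo_J [Finite K] (hψ : Injective ψ)
    (hJ : ∀ k ≠ 0, ∃ k', MapsTo ψ (J K k) (J K k'))
    (h₁ : ∀ x, (ψ (x, 0)).2 = 0) (h₂ : ∀ y, (ψ (0, y)).1 = 0) :
    ∃ ρ : K ≃+* K, ∃ a d : K, a ≠ 0 ∧ d ≠ 0 ∧ ∀ x y, ψ (x, y) = (a * ρ x, d * ρ y) := by
  have hψxy (x y : K) : ψ (x, y) = ((ψ (x, 0)).1, (ψ (0, y)).2) := by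
    rw [ψ.map_prodMk_eq_add]
    ext <;> simp [h₁, h₂]
  have hψ₀ (v : K × K) (hv : v ≠ 0) : ψ v ≠ 0 := (map_ne_zero_iff ψ hψ).mpr hv
  have ha : (ψ (1, 0)).1 ≠ 0 := fun h => hψ₀ (1, 0) (by simp) (Prod.ext h (h₁ 1))
  have hd : (ψ (0, 1)).2 ≠ 0 := fun h => hψ₀ (0, 1) (by simp) (Prod.ext (h₂ 1) h)
  let α : K →+ K := (AddMonoidHom.fst K K).comp (ψ.comp (AddMonoidHom.inl K K))
  have hα (k : K) (hk : k ≠ 0) : ∃ k', ∀ z, α (k * z) = k' * (ψ (0, z)).2 := by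
    obtain ⟨k', hk'⟩ := hJ k hk
    refine ⟨k', fun z => ?_⟩
    have hz : (ψ (k * z, z)).1 = k' * (ψ (k * z, z)).2 := hk' (show (k * z, z) ∈ J K k from rfl)
    rwa [hψxy] at hz
  obtain ⟨ρ, hαρ, hδρ⟩ := exists_ringEquiv_of_map_mul_eq α _ ha hα
  exact ⟨ρ, _, _, ha, hd, fun x y => by rw [hψxy, ← hδρ]; exact congrArg (·, _) (hαρ x)⟩

theorem exists_ringEquiv_of_mapsTo_J_of_swap [Finite K] (hψ : Injective ψ)
    (hJ : ∀ k ≠ 0, ∃ k' ≠ 0, MapsTo ψ (J K k) (J K k'))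
    (h₁ : ∀ x, (ψ (x, 0)).1 = 0) (h₂ : ∀ y, (ψ (0, y)).2 = 0) :
    ∃ ρ : K ≃+* K, ∃ b c : K, b ≠ 0 ∧ c ≠ 0 ∧ ∀ x y, ψ (x, y) = (c * ρ y, b * ρ x) := by
  let σ : K × K →+ K × K := (AddEquiv.prodComm : K × K ≃+ K × K).toAddMonoidHom.comp ψ
  have hσJ (k : K) (hk : k ≠ 0) : ∃ k', MapsTo σ (J K k) (J K k') := by
    obtain ⟨k', hk', hmaps⟩ := hJ k hk
    exact ⟨k'⁻¹, (mapsTo_swap_J hk').comp hmaps⟩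
  obtain ⟨ρ, a, d, ha, hd, hσ⟩ := exists_ringEquiv_of_mapsTo_J σ
    ((AddEquiv.prodComm : K × K ≃+ K × K).injective.comp hψ) hσJ h₁ h₂
  exact ⟨ρ, a, d, ha, hd, fun x y => congrArg Prod.swap (hσ x y)⟩

end Slopes

theorem stmt_1_general
    (F K : Type) [Field F] [Field K] [Algebra F K] [Fintype K]
    (ψ : K × K → K × K)
    (hbij : Function.Bijective ψ)
    (hadd : ∀ u v : K × K, ψ (u + v) = ψ u + ψ v)
    (hL : ∀ f : F, f ≠ 0 → ∃ f' : F, f' ≠ 0 ∧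
      (fun W => ψ '' W) '' {W | ∃ k : K, Algebra.norm F k = f ∧ W = J K k}
        = {W | ∃ k' : K, Algebra.norm F k' = f' ∧ W = J K k'}) :
    ∃ ρ : K ≃+* K,
      (∃ a d : K, a ≠ 0 ∧ d ≠ 0 ∧ ∀ x y : K, ψ (x, y) = (a * ρ x, d * ρ y)) ∨
      (∃ b c : K, b ≠ 0 ∧ c ≠ 0 ∧ ∀ x y : K, ψ (x, y) = (c * ρ y, b * ρ x)) := by
  let Ψ : K × K →+ K × K := .mk' ψ hadd
  have hJ := exists_mapsTo_J_of_image_normSurfaces ψ hL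
  have haxes := mapsTo_axes_of_mapsTo_J Ψ hbij.1 hJ
  rcases Ψ.preserves_or_swaps_axes hbij.2 haxes with ⟨h₁, h₂⟩ | ⟨h₁, h₂⟩
  · obtain ⟨ρ, a, d, ha, hd, hψ⟩ := exists_ringEquiv_of_mapsTo_J Ψ hbij.1
      (fun k hk => (hJ k hk).imp fun _ => And.right) h₁ h₂
    exact ⟨ρ, .inl ⟨a, d, ha, hd, hψ⟩⟩
  · obtain ⟨ρ, b, c, hb, hc, hψ⟩ := exists_ringEquiv_of_mapsTo_J_of_swap Ψ hbij.1 hJ h₁ h₂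
    exact ⟨ρ, .inr ⟨b, c, hb, hc, hψ⟩⟩

theorem stmt_1
    (q n : ℕ) (hq : 2 < q) (hqp : IsPrimePow q) (hn : 1 ≤ n)
    (hne : (n, q) ≠ (1, 3))
    (F K : Type) [Field F] [Field K] [Algebra F K] [Fintype F] [Fintype K]
    (hcF : Fintype.card F = q) (hcK : Fintype.card K = q ^ (n + 1))
    (τ : F ≃+* F) (ψ : K × K → K × K)
    (hbij : Function.Bijective ψ)
    (hadd : ∀ u v : K × K, ψ (u + v) = ψ u + ψ v)
    (hsem : ∀ (f : F) (v : K × K), ψ (f • v) = τ f • ψ v)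
    (hL : ∀ f : F, f ≠ 0 → ∃ f' : F, f' ≠ 0 ∧
      (fun W => ψ '' W) '' {W | ∃ k : K, Algebra.norm F k = f ∧ W = J K k}
        = {W | ∃ k' : K, Algebra.norm F k' = f' ∧ W = J K k'}) :
    ∃ ρ : K ≃+* K,
      (∃ a d : K, a ≠ 0 ∧ d ≠ 0 ∧ ∀ x y : K, ψ (x, y) = (a * ρ x, d * ρ y)) ∨
      (∃ b c : K, b ≠ 0 ∧ c ≠ 0 ∧ ∀ x y : K, ψ (x, y) = (c * ρ y, b * ρ x)) :=
  stmt_1_general F K ψ hbij hadd hL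
end

section
/- Let a, b ∈ K with a ≠ b and let f ∈ F∖{0}. Define C₁ = {x ∈ K : N(x) = 1} and C₂ = {x ∈ K : N(x − a) = f·N(x − b)}. If C₁ is not a subset of C₂, then the cardinality of C₁ ∩ C₂ is at most 2·(q^n − 1)/(q − 1). -/
/-!
Write `Q = q ^ n` and `d = 1 + q + ⋯ + q ^ (n - 1) = (q ^ n - 1) / (q - 1)`, so that
`N(y) = y ^ (d + Q)`. On `C₁` we have `x ^ Q = x⁻¹ ^ d`, and `y ↦ y ^ Q` is additive, hence
`x ^ d · N(x - c) = (x - c) ^ d · (1 - c ^ Q · x ^ d)`, a polynomial in `x` of degree `2d`.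
So `C₁ ∩ C₂` lies in the zero set of a polynomial of degree at most `2d`, which is nonzero
because some point of `C₁` lies outside `C₂`.
-/

open Polynomial

section CommRing

variable {R : Type*} [CommRing R]

noncomputable def normPoly (d Q : ℕ) (c : R) : R[X] :=
  (X - C c) ^ d * (1 - C (c ^ Q) * X ^ d)

theorem natDegree_normPoly_le (d Q : ℕ) (c : R) : (normPoly d Q c).natDegree ≤ 2 * d := by
  unfold normPoly
  compute_degree
  omega

theorem eval_normPoly {d Q : ℕ} {x : R} (c : R) (hx : x ^ d * x ^ Q = 1)
    (hc : (x - c) ^ Q = x ^ Q - c ^ Q) :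
    (normPoly d Q c).eval x = x ^ d * (x - c) ^ (d + Q) := by
  simp only [normPoly, eval_mul, eval_pow, eval_sub, eval_X, eval_C, eval_one]
  rw [pow_add, hc]
  linear_combination -(x - c) ^ d * hx

end CommRing

namespace FiniteField

variable {F K : Type*} [Field F] [Fintype F] [Field K] [Algebra F K]

theorem sub_pow_card_pow (x c : K) (i : ℕ) :
    (x - c) ^ (Fintype.card F ^ i) = x ^ (Fintype.card F ^ i) - c ^ (Fintype.card F ^ i) := by
  simpa only [AlgHom.coe_pow, coe_frobeniusAlgHom, pow_iterate] using
    map_sub (frobeniusAlgHom F K ^ i) x c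

variable [Finite K] {n : ℕ}

theorem algebraMap_norm_eq_pow_geom_add (hn : Module.finrank F K = n + 1) (x : K) :
    algebraMap F K (Algebra.norm F x) =
      x ^ (∑ i ∈ Finset.range n, Fintype.card F ^ i + Fintype.card F ^ n) := by
  rw [algebraMap_norm_eq_pow_sum, hn, Finset.sum_range_succ, Nat.card_eq_fintype_card]

theorem eval_normPoly_of_norm_eq_one (hn : Module.finrank F K = n + 1) {x : K}
    (hx : Algebra.norm F x = 1) (c : K) :
    (normPoly (∑ i ∈ Finset.range n, Fintype.card F ^ i) (Fintype.card F ^ n) c).eval x =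
      x ^ (∑ i ∈ Finset.range n, Fintype.card F ^ i) *
        algebraMap F K (Algebra.norm F (x - c)) := by
  have hx' :
      x ^ (∑ i ∈ Finset.range n, Fintype.card F ^ i) * x ^ (Fintype.card F ^ n) = 1 := by
    rw [← pow_add, ← algebraMap_norm_eq_pow_geom_add hn, hx, map_one]
  rw [eval_normPoly c hx' (sub_pow_card_pow x c n), algebraMap_norm_eq_pow_geom_add hn]

theorem ncard_norm_eq_one_inter_le (hn : Module.finrank F K = n + 1) (a b : K) (f : F)
    (hns : ¬ {x : K | Algebra.norm F x = 1} ⊆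
      {x | Algebra.norm F (x - a) = f * Algebra.norm F (x - b)}) :
    ({x : K | Algebra.norm F x = 1} ∩
      {x | Algebra.norm F (x - a) = f * Algebra.norm F (x - b)}).ncard ≤
      2 * ∑ i ∈ Finset.range n, Fintype.card F ^ i := by
  set d := ∑ i ∈ Finset.range n, Fintype.card F ^ i
  set W := normPoly d (Fintype.card F ^ n) a -
    C (algebraMap F K f) * normPoly d (Fintype.card F ^ n) b
  have hW : ∀ x : K, Algebra.norm F x = 1 →
      (W.eval x = 0 ↔ Algebra.norm F (x - a) = f * Algebra.norm F (x - b)) := by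
    intro x hx
    have hxd : x ^ d ≠ 0 := pow_ne_zero _ (by rintro rfl; simp at hx)
    have hWx : W.eval x =
        x ^ d * algebraMap F K (Algebra.norm F (x - a) - f * Algebra.norm F (x - b)) := by
      rw [eval_sub, eval_mul, eval_C, eval_normPoly_of_norm_eq_one hn hx,
        eval_normPoly_of_norm_eq_one hn hx, map_sub (algebraMap F K), map_mul]
      ring
    rw [hWx, mul_eq_zero, or_iff_right hxd, FaithfulSMul.algebraMap_eq_zero_iff, sub_eq_zero]
  obtain ⟨x₀, hx₀, hx₀W⟩ := Set.not_subset.mp hns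
  have hW0 : W ≠ 0 := fun h => hx₀W ((hW x₀ hx₀).mp (by rw [h, eval_zero]))
  calc _ ≤ (W.rootSet K).ncard := by
        refine Set.ncard_le_ncard (fun x ⟨hx, hxC⟩ => ?_) (W.rootSet_finite K)
        rw [mem_rootSet, aeval_def, Algebra.algebraMap_self, eval₂_id]
        exact ⟨hW0, (hW x hx).mpr hxC⟩
    _ ≤ W.natDegree := W.ncard_rootSet_le K
    _ ≤ 2 * d := max_self (2 * d) ▸ natDegree_sub_le_of_le (natDegree_normPoly_le _ _ _)
        (natDegree_C_mul_le _ _ |>.trans (natDegree_normPoly_le _ _ _))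

end FiniteField

theorem stmt_3_general
    (q n : ℕ)
    (F K : Type) [Field F] [Field K] [Algebra F K] [Fintype F] [Fintype K]
    (hcF : Fintype.card F = q) (hcK : Fintype.card K = q ^ (n + 1))
    (a b : K) (f : F)
    (C₁ C₂ : Set K)
    (hC₁ : C₁ = {x : K | Algebra.norm F x = 1})
    (hC₂ : C₂ = {x : K | Algebra.norm F (x - a) = f * Algebra.norm F (x - b)})
    (hns : ¬ C₁ ⊆ C₂) :
    (C₁ ∩ C₂).ncard ≤ 2 * ((q ^ n - 1) / (q - 1)) := by
  subst hC₁ hC₂ hcF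
  have hq : 1 < Fintype.card F := Fintype.one_lt_card
  have hrank : Module.finrank F K = n + 1 :=
    Nat.pow_right_injective hq (Module.card_eq_pow_finrank.symm.trans hcK)
  rw [← Nat.geomSum_eq hq]
  exact FiniteField.ncard_norm_eq_one_inter_le hrank a b f hns

theorem stmt_3
    (q n : ℕ) (hq : 2 < q) (hqp : IsPrimePow q) (hn : 1 ≤ n)
    (F K : Type) [Field F] [Field K] [Algebra F K] [Fintype F] [Fintype K]
    (hcF : Fintype.card F = q) (hcK : Fintype.card K = q ^ (n + 1))
    (a b : K) (hab : a ≠ b) (f : F) (hf : f ≠ 0)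
    (C₁ C₂ : Set K)
    (hC₁ : C₁ = {x : K | Algebra.norm F x = 1})
    (hC₂ : C₂ = {x : K | Algebra.norm F (x - a) = f * Algebra.norm F (x - b)})
    (hns : ¬ C₁ ⊆ C₂) :
    (C₁ ∩ C₂).ncard ≤ 2 * ((q ^ n - 1) / (q - 1)) :=
  stmt_3_general q n F K hcF hcK a b f C₁ C₂ hC₁ hC₂ hns
end

section
/- Let ξ be either ξ⁺_{α,τ} or ξ⁻_{α,τ} for some α ∈ F∖{0} and field automorphism τ of F, and suppose that every orbit of ξ, acting as a permutation of F∖{0}, has even cardinality. Then the number of subsets B ⊆ F∖{0} satisfying ξ(B) = (F∖{0})∖B is exactly 2^t, where t is the number of orbits of ξ on F∖{0} (and each such B has cardinality (q−1)/2). -/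
/-!
A set `B` with `g '' B = S \ B` alternates along each orbit of `g`, so when every orbit has even
length it is fixed, orbit by orbit, by one of two choices: there are `2 ^ t` such sets, and `B` and
`g '' B` split `S` into halves. To count them, fix a parity `ε` alternating along orbits (even steps
from a base point chosen in each orbit; this is where even orbit lengths are needed). Then
`B ↦ {y ∈ S | y ∈ B ↔ ε y}` is a bijection onto the `g`-invariant subsets of `S`, i.e. onto the
unions of orbits.
-/

open Function Set

section IterOrbit

variable {A : Type*} {g : A → A} {x y : A}

def iterOrbit (g : A → A) (x : A) : Set A := range fun m : ℕ => g^[m] x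

lemma mem_iterOrbit_self (g : A → A) (x : A) : x ∈ iterOrbit g x := ⟨0, rfl⟩

lemma iterOrbit_subset {S : Set A} (hS : MapsTo g S S) (hx : x ∈ S) : iterOrbit g x ⊆ S := by
  rintro _ ⟨m, rfl⟩
  exact hS.iterate m hx

lemma iterOrbit_subset_iff {C : Set A} (hC : g ⁻¹' C = C) : iterOrbit g x ⊆ C ↔ x ∈ C :=
  ⟨fun h => h (mem_iterOrbit_self g x), iterOrbit_subset hC.ge⟩

lemma iterOrbit_eq_image (hx : x ∈ periodicPts g) :
    iterOrbit g x = (fun m => g^[m] x) '' Iio (minimalPeriod g x) := by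
  refine (image_subset_range _ _).antisymm' ?_
  rintro _ ⟨m, rfl⟩
  exact ⟨m % minimalPeriod g x, Nat.mod_lt _ (minimalPeriod_pos_of_mem_periodicPts hx),
    iterate_mod_minimalPeriod_eq⟩

lemma ncard_iterOrbit (hx : x ∈ periodicPts g) : (iterOrbit g x).ncard = minimalPeriod g x := by
  rw [iterOrbit_eq_image hx, iterate_injOn_Iio_minimalPeriod.ncard_image, ncard_Iio_nat]

lemma iterate_mem_periodicPts (hx : x ∈ periodicPts g) (m : ℕ) : g^[m] x ∈ periodicPts g :=
  mk_mem_periodicPts (minimalPeriod_pos_of_mem_periodicPts hx)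
    ((isPeriodicPt_minimalPeriod g x).apply_iterate m)

lemma iterOrbit_eq_of_mem (hx : x ∈ periodicPts g) (hy : y ∈ iterOrbit g x) :
    iterOrbit g y = iterOrbit g x := by
  obtain ⟨m, rfl⟩ := hy
  have hsub : iterOrbit g (g^[m] x) ⊆ iterOrbit g x := by
    rintro _ ⟨n, rfl⟩
    exact ⟨n + m, iterate_add_apply g n m x⟩
  refine eq_of_subset_of_ncard_le hsub ?_ ?_
  · rw [ncard_iterOrbit hx, ncard_iterOrbit (iterate_mem_periodicPts hx m),
      minimalPeriod_apply_iterate hx]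
  · rw [iterOrbit_eq_image hx]
    exact (finite_Iio _).image _

lemma iterOrbit_apply (hx : x ∈ periodicPts g) : iterOrbit g (g x) = iterOrbit g x :=
  iterOrbit_eq_of_mem hx ⟨1, rfl⟩

lemma even_iff_even_of_iterate_eq (hx : x ∈ periodicPts g) (hev : Even (minimalPeriod g x))
    {m n : ℕ} (h : g^[m] x = g^[n] x) : Even m ↔ Even n := by
  have hpos := minimalPeriod_pos_of_mem_periodicPts hx
  have hmod : m % minimalPeriod g x = n % minimalPeriod g x :=
    iterate_injOn_Iio_minimalPeriod (Nat.mod_lt _ hpos) (Nat.mod_lt _ hpos)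
      (by simp only [iterate_mod_minimalPeriod_eq, h])
  have h2 := even_iff_two_dvd.mp hev
  rw [Nat.even_iff, Nat.even_iff, ← Nat.mod_mod_of_dvd m h2, ← Nat.mod_mod_of_dvd n h2, hmod]

end IterOrbit

section AlternatingSets

variable {A : Type*} {g : A → A} {S : Set A}

lemma exists_parity_of_even_ncard_iterOrbit [Finite A] (hg : Injective g)
    (heven : ∀ x ∈ S, Even (iterOrbit g x).ncard) : ∃ ε : A → Prop, ∀ y ∈ S, ε (g y) ↔ ¬ ε y := by
  let r : A → A := fun y => (Quotient.mk (Setoid.ker (iterOrbit g)) y).out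
  have hr : ∀ y, iterOrbit g (r y) = iterOrbit g y := fun y => Quotient.mk_out (s := Setoid.ker _) y
  refine ⟨fun y => ∃ k, Even k ∧ g^[k] (r y) = y, fun y hy => ?_⟩
  have hper := hg.mem_periodicPts (r y)
  have hev : Even (minimalPeriod g (r y)) := by rw [← ncard_iterOrbit hper, hr]; exact heven y hy
  have hrg : r (g y) = r y :=
    congrArg Quotient.out (Quotient.sound (iterOrbit_apply (hg.mem_periodicPts y)))
  have hpar : ∀ n, (∃ k, Even k ∧ g^[k] (r y) = g^[n] (r y)) ↔ Even n := fun n =>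
    ⟨fun ⟨k, hk, h⟩ => (even_iff_even_of_iterate_eq hper hev h).mp hk, fun hn => ⟨n, hn, rfl⟩⟩
  obtain ⟨m, hm⟩ : ∃ m, g^[m] (r y) = y := (hr y).ge (mem_iterOrbit_self g y)
  have hy_par := hpar m
  have hgy_par := hpar (m + 1)
  rw [hm] at hy_par
  rw [iterate_succ_apply', hm, ← hrg] at hgy_par
  exact hgy_par.trans (Nat.even_add_one.trans (not_congr hy_par.symm))

lemma image_eq_diff_iff (hg : Bijective g) (hS : g ⁻¹' S = S) {B : Set A} :
    B ⊆ S ∧ g '' B = S \ B ↔ B = S \ g ⁻¹' B := by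
  have hpre : g ⁻¹' (S \ B) = S \ g ⁻¹' B := by rw [preimage_sdiff, hS]
  constructor
  · rintro ⟨-, h⟩
    rw [← hpre, ← h, preimage_image_eq _ hg.injective]
  · intro h
    refine ⟨h ▸ sdiff_subset, ?_⟩
    rw [← image_preimage_eq (S \ B) hg.surjective, hpre, ← h]

def parityTwist (S : Set A) (ε : A → Prop) (X : Set A) : Set A := {y ∈ S | y ∈ X ↔ ε y}

lemma parityTwist_subset (ε : A → Prop) (X : Set A) : parityTwist S ε X ⊆ S := sep_subset _ _

lemma parityTwist_parityTwist (ε : A → Prop) {X : Set A} (hX : X ⊆ S) :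
    parityTwist S ε (parityTwist S ε X) = X := by
  ext y
  by_cases hy : y ∈ S
  · simp only [parityTwist, mem_sep_iff, hy, true_and]
    tauto
  · exact iff_of_false (fun h => hy h.1) (fun h => hy (hX h))

lemma preimage_parityTwist_eq_iff (hS : g ⁻¹' S = S) {ε : A → Prop}
    (hε : ∀ y ∈ S, ε (g y) ↔ ¬ ε y) {X : Set A} (hX : X ⊆ S) :
    g ⁻¹' parityTwist S ε X = parityTwist S ε X ↔ X = S \ g ⁻¹' X := by
  have hgS : ∀ y, g y ∈ S ↔ y ∈ S := fun y => Set.ext_iff.mp hS y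
  simp only [Set.ext_iff, parityTwist, mem_preimage, mem_sep_iff, mem_sdiff, hgS]
  refine forall_congr' fun y => ?_
  by_cases hy : y ∈ S
  · have := hε y hy
    simp only [hy, true_and]
    tauto
  · simp only [hy, false_and, iff_false, true_iff]
    exact fun h => hy (hX h)

lemma ncard_antiinvariant_eq_ncard_invariant (hS : g ⁻¹' S = S) {ε : A → Prop}
    (hε : ∀ y ∈ S, ε (g y) ↔ ¬ ε y) :
    {B : Set A | B = S \ g ⁻¹' B}.ncard = {C : Set A | C ⊆ S ∧ g ⁻¹' C = C}.ncard := by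
  have hBS : ∀ {B : Set A}, B = S \ g ⁻¹' B → B ⊆ S := fun hB => hB ▸ sdiff_subset
  refine ncard_congr (fun B _ => parityTwist S ε B) ?_ ?_ ?_
  · intro B hB
    exact ⟨parityTwist_subset ε B, (preimage_parityTwist_eq_iff hS hε (hBS hB)).mpr hB⟩
  · intro B B' hB hB' h
    rw [← parityTwist_parityTwist ε (hBS hB), h, parityTwist_parityTwist ε (hBS hB')]
  · rintro C ⟨hCS, hC⟩
    refine ⟨parityTwist S ε C, ?_, parityTwist_parityTwist ε hCS⟩
    rw [mem_ofPred_eq, ← preimage_parityTwist_eq_iff hS hε (parityTwist_subset ε C),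
      parityTwist_parityTwist ε hCS, hC]

lemma ncard_invariant_eq_two_pow [Finite A] (hg : Injective g) (hS : g ⁻¹' S = S) :
    {C : Set A | C ⊆ S ∧ g ⁻¹' C = C}.ncard = 2 ^ {s | ∃ x ∈ S, s = iterOrbit g x}.ncard := by
  set T := {s | ∃ x ∈ S, s = iterOrbit g x}
  rw [← ncard_powerset T]
  refine ncard_congr (fun C _ => {s ∈ T | s ⊆ C}) (fun C _ => sep_subset _ _) ?_ ?_
  · rintro C C' ⟨hCS, hC⟩ ⟨hC'S, hC'⟩ h
    have hmem : ∀ {C : Set A}, C ⊆ S → g ⁻¹' C = C → ∀ y,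
        y ∈ C ↔ iterOrbit g y ∈ {s ∈ T | s ⊆ C} := fun hCS hC y =>
      ⟨fun hy => ⟨⟨y, hCS hy, rfl⟩, (iterOrbit_subset_iff hC).2 hy⟩,
        fun hy => (iterOrbit_subset_iff hC).1 hy.2⟩
    ext y
    rw [hmem hCS hC, hmem hC'S hC', h]
  · intro D hD
    refine ⟨{y ∈ S | iterOrbit g y ∈ D}, ⟨sep_subset _ _, ext fun y => ?_⟩, ext fun s => ?_⟩
    · simp only [mem_preimage, mem_sep_iff, iterOrbit_apply (hg.mem_periodicPts y)]
      rw [← mem_preimage, hS]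
    · constructor
      · rintro ⟨⟨x, -, rfl⟩, hsub⟩
        exact (hsub (mem_iterOrbit_self g x)).2
      · intro hs
        obtain ⟨x, hx, rfl⟩ := hD hs
        refine ⟨⟨x, hx, rfl⟩, fun z hz => ⟨iterOrbit_subset hS.ge hx hz, ?_⟩⟩
        rwa [iterOrbit_eq_of_mem (hg.mem_periodicPts x) hz]

theorem ncard_image_eq_diff_eq_two_pow [Finite A] (hg : Injective g) (hS : g ⁻¹' S = S)
    (heven : ∀ x ∈ S, Even (iterOrbit g x).ncard) :
    {B : Set A | B ⊆ S ∧ g '' B = S \ B}.ncard = 2 ^ {s | ∃ x ∈ S, s = iterOrbit g x}.ncard := by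
  obtain ⟨ε, hε⟩ := exists_parity_of_even_ncard_iterOrbit hg heven
  have hbij := Finite.injective_iff_bijective.mp hg
  simp only [image_eq_diff_iff hbij hS]
  rw [ncard_antiinvariant_eq_ncard_invariant hS hε, ncard_invariant_eq_two_pow hg hS]

lemma two_mul_ncard_of_image_eq_diff [Finite A] (hg : Injective g) {B : Set A} (hB : B ⊆ S)
    (h : g '' B = S \ B) : 2 * B.ncard = S.ncard := by
  rw [← ncard_sdiff_add_ncard_of_subset hB, ← h, ncard_image_of_injective _ hg, two_mul]

end AlternatingSets

theorem stmt_7_general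
    (q : ℕ)
    (F : Type) [Field F] [Fintype F] (hcF : Fintype.card F = q)
    (α : F) (hα : α ≠ 0) (τ : F ≃+* F) (ξ : F → F)
    (hξ : (∀ x : F, ξ x = α * τ x) ∨ (∀ x : F, ξ x = α * (τ x)⁻¹))
    (heven : ∀ x : F, x ≠ 0 → Even (Set.ncard {y : F | ∃ m : ℕ, ξ^[m] x = y})) :
    {B : Set F | B ⊆ {f : F | f ≠ 0} ∧ ξ '' B = {f : F | f ≠ 0} \ B}.ncard
        = 2 ^ Set.ncard {s : Set F | ∃ x : F, x ≠ 0 ∧ s = {y : F | ∃ m : ℕ, ξ^[m] x = y}} ∧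
      ∀ B : Set F, B ⊆ {f : F | f ≠ 0} → ξ '' B = {f : F | f ≠ 0} \ B →
        B.ncard = (q - 1) / 2 := by
  obtain ⟨φ, rfl, hφ, hφ0⟩ : ∃ φ : F → F, ξ = (α * φ ·) ∧ Injective φ ∧ ∀ x, φ x = 0 ↔ x = 0 := by
    rcases hξ with h | h
    · exact ⟨τ, funext h, τ.injective, fun x => map_eq_zero τ⟩
    · exact ⟨fun x => (τ x)⁻¹, funext h, inv_injective.comp τ.injective, by simp⟩
  have hinj : Injective (α * φ ·) := (mul_right_injective₀ hα).comp hφ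
  have hS : (α * φ ·) ⁻¹' {f | f ≠ 0} = {f | f ≠ 0} := by ext x; simp [hα, hφ0]
  have hcard : {f : F | f ≠ 0}.ncard = q - 1 := by
    rw [show {f : F | f ≠ 0} = {0}ᶜ from rfl, ncard_compl, ncard_singleton, Nat.card_eq_fintype_card,
      hcF]
  refine ⟨ncard_image_eq_diff_eq_two_pow hinj hS heven, fun B hB h => ?_⟩
  have := two_mul_ncard_of_image_eq_diff hinj hB h
  omega

theorem stmt_7
    (q : ℕ) (hq : Odd q) (hqp : IsPrimePow q)
    (F : Type) [Field F] [Fintype F] (hcF : Fintype.card F = q)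
    (α : F) (hα : α ≠ 0) (τ : F ≃+* F) (ξ : F → F)
    (hξ : (∀ x : F, ξ x = α * τ x) ∨ (∀ x : F, ξ x = α * (τ x)⁻¹))
    (heven : ∀ x : F, x ≠ 0 → Even (Set.ncard {y : F | ∃ m : ℕ, ξ^[m] x = y})) :
    {B : Set F | B ⊆ {f : F | f ≠ 0} ∧ ξ '' B = {f : F | f ≠ 0} \ B}.ncard
        = 2 ^ Set.ncard {s : Set F | ∃ x : F, x ≠ 0 ∧ s = {y : F | ∃ m : ℕ, ξ^[m] x = y}} ∧
      ∀ B : Set F, B ⊆ {f : F | f ≠ 0} → ξ '' B = {f : F | f ≠ 0} \ B →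
        B.ncard = (q - 1) / 2 :=
  stmt_7_general q F hcF α hα τ ξ hξ heven
end

section
/- Let I ⊆ F∖{0} with 2 ≤ |I| ≤ (q−1)/2. Let S = {J(∞)} ∪ {J(k) : k ∈ K} and S^q = {J(∞)} ∪ {J^q(k) : k ∈ K}. Then the number of subspaces belonging to both S and A_I equals 2 + (q − 1 − |I|)(q + 1), and the number of subspaces belonging to both S^q and A_I equals 2 + |I|(q + 1); in particular, both of these numbers exceed 2q + 2. -/
/-- J^q(k) = {(k·x^q, x) : x ∈ K} -/
def Jq (K : Type) [Field K] (q : ℕ) (k : K) : Set (K × K) := {p | p.1 = k * p.2 ^ q}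

/-- The two-dimensional André spread A_I. -/
def AndreSpread (F K : Type) [Field F] [Field K] [Algebra F K] (q : ℕ) (I : Set F) :
    Set (Set (K × K)) :=
  {Jinf K, J K 0}
    ∪ {W | ∃ k : K, k ≠ 0 ∧ Algebra.norm F k ∈ I ∧ W = Jq K q k}
    ∪ {W | ∃ k : K, k ≠ 0 ∧ Algebra.norm F k ∉ I ∧ W = J K k}

/-!
A subspace `J(k)` lies in `A_I` exactly when `N(k) ∉ I` (this includes `J(0)`), and `J^q(k)`
exactly when `k = 0` or `N(k) ∈ I`: for `k ≠ 0` the subspaces `J^q(k)` and `J(k')` differ, since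
`x ↦ x^q` is not the identity of `K`. The norm is a surjective homomorphism `Kˣ → Fˣ`, so its
fibres over `Fˣ` are cosets of the kernel and each has `(q² - 1)/(q - 1) = q + 1` elements.
Counting the preimages of `I` and of its complement in `Fˣ` gives the two numbers, and the bounds
follow from `2 ≤ |I| ≤ q - 1 - |I|`.
-/

open Finset

section Norm

variable {F K : Type*} [Field F] [Field K] [Algebra F K] [Fintype F] [Fintype K]

theorem card_norm_fiber_mul [DecidableEq F] {f : F} (hf : f ≠ 0) :
    #{k : K | Algebra.norm F k = f} * (Fintype.card F - 1) = Fintype.card K - 1 := by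
  classical
  let φ : Kˣ →* Fˣ := Units.map (Algebra.norm F)
  have hsurj : Function.Surjective φ := FiniteField.unitsMap_norm_surjective F K
  have hfiber : ∀ g : Fˣ, #{u : Kˣ | φ u = g} = #{u : Kˣ | φ u = 1} := fun g =>
    MonoidHom.card_fiber_eq_of_mem_range φ (hsurj g) (hsurj 1)
  have hunits : #{u : Kˣ | φ u = Units.mk0 f hf} = #{k : K | Algebra.norm F k = f} := by
    refine card_bij' (fun u _ => (u : K)) (fun k hk => Units.mk0 k ?_) ?_ ?_ ?_ ?_
    · rintro rfl
      simp [eq_comm, hf] at hk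
    · intro u hu
      simpa [φ, Units.ext_iff] using hu
    · intro k hk
      simpa [φ, Units.ext_iff] using hk
    · exact fun u _ => Units.mk0_val u _
    · exact fun _ _ => rfl
  have hsum : Fintype.card Kˣ = ∑ g : Fˣ, #{u : Kˣ | φ u = g} :=
    card_eq_sum_card_fiberwise (fun _ _ => mem_univ _)
  rw [← hunits, hfiber, ← Fintype.card_units, ← Fintype.card_units, hsum,
    Finset.sum_congr rfl fun g _ => hfiber g, sum_const, card_univ, smul_eq_mul, mul_comm]

theorem ncard_norm_preimage_mul {S : Set F} (hS : (0 : F) ∉ S) :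
    (Algebra.norm F ⁻¹' S : Set K).ncard * (Fintype.card F - 1)
      = S.ncard * (Fintype.card K - 1) := by
  classical
  have hfinset : (Algebra.norm F ⁻¹' S : Set K).toFinset
      = ({k | Algebra.norm F k ∈ S.toFinset} : Finset K) := by
    ext; simp
  rw [Set.ncard_eq_toFinset_card', Set.ncard_eq_toFinset_card', hfinset,
    ← sum_card_fiberwise_eq_card_filter, sum_mul,
    Finset.sum_congr rfl fun f hf =>
      card_norm_fiber_mul (ne_of_mem_of_not_mem (Set.mem_toFinset.1 hf) hS),
    sum_const, smul_eq_mul]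

theorem ncard_norm_preimage_of_card_sq {q : ℕ} (hcF : Fintype.card F = q)
    (hcK : Fintype.card K = q ^ 2) {S : Set F} (hS : (0 : F) ∉ S) :
    (Algebra.norm F ⁻¹' S : Set K).ncard = S.ncard * (q + 1) := by
  have hq : 0 < q - 1 := by have := Fintype.one_lt_card (α := F); omega
  have h := ncard_norm_preimage_mul (K := K) hS
  rw [hcF, hcK, show q ^ 2 - 1 = (q + 1) * (q - 1) from Nat.sq_sub_sq q 1, ← mul_assoc] at h
  exact Nat.eq_of_mul_eq_mul_right hq h

end Norm

theorem exists_pow_ne_self {K : Type*} [Field K] [Fintype K] {q : ℕ} (hq : 1 < q)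
    (hcard : q < Fintype.card K) : ∃ x : K, x ^ q ≠ x := by
  classical
  by_contra! h
  have hroots : (univ : Finset K).val ⊆ (Polynomial.X ^ q - Polynomial.X : Polynomial K).roots :=
    fun x _ => by
      simp [Polynomial.mem_roots (FiniteField.X_pow_card_sub_X_ne_zero K hq), h x]
  have := Polynomial.card_le_degree_of_subset_roots hroots
  rw [FiniteField.X_pow_card_sub_X_natDegree_eq K hq, card_univ] at this
  omega

section Subspaces

variable {K : Type} [Field K] {q : ℕ}

theorem Jinf_ne_J (k : K) : Jinf K ≠ J K k := fun h => by
  simpa [J] using h.le (show ((1 : K), (0 : K)) ∈ Jinf K from rfl)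

theorem Jinf_ne_Jq (hq : q ≠ 0) (k : K) : Jinf K ≠ Jq K q k := fun h => by
  simpa [Jq, hq] using h.le (show ((1 : K), (0 : K)) ∈ Jinf K from rfl)

theorem J_injective : Function.Injective (J K) := fun k k' h => by
  simpa [J] using h.le (show ((k : K), (1 : K)) ∈ J K k by simp [J])

theorem Jq_injective : Function.Injective (Jq K q) := fun k k' h => by
  simpa [Jq] using h.le (show ((k : K), (1 : K)) ∈ Jq K q k by simp [Jq])

theorem Jq_zero : Jq K q 0 = J K 0 := by
  ext; simp [J, Jq]

theorem Jq_ne_J (hx : ∃ x : K, x ^ q ≠ x) {k : K} (hk : k ≠ 0) (k' : K) :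
    Jq K q k ≠ J K k' := by
  intro h
  have hkk' : k = k' := by
    simpa [J] using h.le (show ((k : K), (1 : K)) ∈ Jq K q k by simp [Jq])
  subst hkk'
  obtain ⟨x, hx⟩ := hx
  have hmem : (k * x, x) ∈ Jq K q k := h.ge (show (k * x, x) ∈ J K k from rfl)
  exact hx (mul_left_cancel₀ hk hmem).symm

end Subspaces

theorem ncard_insert_range_inter {α β : Type*} [Finite α] {f : α → β} (hf : f.Injective)
    {a : β} {A : Set β} (ha : a ∉ Set.range f) (haA : a ∈ A) :
    (insert a (Set.range f) ∩ A).ncard = (f ⁻¹' A).ncard + 1 := by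
  rw [Set.insert_inter_of_mem haA, ← Set.image_preimage_eq_range_inter,
    Set.ncard_insert_of_notMem fun h => ha (Set.image_subset_range _ _ h),
    Set.ncard_image_of_injective _ hf]

section AndreSpread

variable {F K : Type} [Field F] [Field K] [Algebra F K] {q : ℕ} {I : Set F}

theorem Jinf_mem_andreSpread : Jinf K ∈ AndreSpread F K q I :=
  Or.inl (Or.inl (Or.inl rfl))

theorem preimage_J_andreSpread [Finite K] (hx : ∃ x : K, x ^ q ≠ x) :
    J K ⁻¹' AndreSpread F K q I = insert 0 (Algebra.norm F ⁻¹' (insert 0 I)ᶜ) := by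
  ext k
  simp only [AndreSpread, Set.mem_preimage, Set.mem_union, Set.mem_insert_iff,
    Set.mem_singleton_iff, Set.mem_ofPred_eq, Set.mem_compl_iff, Algebra.norm_eq_zero_iff]
  constructor
  · rintro (((h | h) | ⟨k', hk', -, h⟩) | ⟨k', hk', hk'I, h⟩)
    · exact absurd h.symm (Jinf_ne_J k)
    · exact Or.inl (J_injective h)
    · exact absurd h.symm (Jq_ne_J hx hk' k)
    · exact Or.inr (J_injective h ▸ not_or.2 ⟨hk', hk'I⟩)
  · rintro (rfl | hk)
    · exact Or.inl (Or.inl (Or.inr rfl))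
    · exact Or.inr ⟨k, (not_or.1 hk).1, (not_or.1 hk).2, rfl⟩

theorem preimage_Jq_andreSpread (hq : q ≠ 0) (hx : ∃ x : K, x ^ q ≠ x) :
    Jq K q ⁻¹' AndreSpread F K q I = insert 0 (Algebra.norm F ⁻¹' I) := by
  ext k
  simp only [AndreSpread, Set.mem_preimage, Set.mem_union, Set.mem_insert_iff,
    Set.mem_singleton_iff, Set.mem_ofPred_eq]
  constructor
  · rintro (((h | h) | ⟨k', -, hk'I, h⟩) | ⟨k', -, -, h⟩)
    · exact absurd h.symm (Jinf_ne_Jq hq k)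
    · exact Or.inl (Jq_injective (h.trans Jq_zero.symm))
    · exact Or.inr (Jq_injective h ▸ hk'I)
    · by_contra hk
      exact Jq_ne_J hx (not_or.1 hk).1 k' h
  · rintro (rfl | hk)
    · exact Or.inl (Or.inl (Or.inr Jq_zero))
    · rcases eq_or_ne k 0 with rfl | hk0
      · exact Or.inl (Or.inl (Or.inr Jq_zero))
      · exact Or.inl (Or.inr ⟨k, hk0, hk, rfl⟩)

end AndreSpread

theorem stmt_8_general
    (q : ℕ)
    (F K : Type) [Field F] [Field K] [Algebra F K] [Fintype F] [Fintype K]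
    (hcF : Fintype.card F = q) (hcK : Fintype.card K = q ^ 2)
    (I : Set F) (hIss : I ⊆ {f : F | f ≠ 0})
    (hI2 : 2 ≤ I.ncard) (hIhalf : 2 * I.ncard ≤ q - 1) :
    ((insert (Jinf K) {W | ∃ k : K, W = J K k} ∩ AndreSpread F K q I).ncard
        = 2 + (q - 1 - I.ncard) * (q + 1)) ∧
    ((insert (Jinf K) {W | ∃ k : K, W = Jq K q k} ∩ AndreSpread F K q I).ncard
        = 2 + I.ncard * (q + 1)) ∧
    2 * q + 2 < 2 + (q - 1 - I.ncard) * (q + 1) ∧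
    2 * q + 2 < 2 + I.ncard * (q + 1) := by
  have hI : (0 : F) ∉ I := fun h => hIss h rfl
  have hq : 1 < q := hcF ▸ Fintype.one_lt_card
  have hx : ∃ x : K, x ^ q ≠ x := exists_pow_ne_self hq (by rw [hcK]; nlinarith)
  have hrangeJ : {W | ∃ k : K, W = J K k} = Set.range (J K) := by ext; simp [eq_comm]
  have hrangeJq : {W | ∃ k : K, W = Jq K q k} = Set.range (Jq K q) := by ext; simp [eq_comm]
  have hcompl : ((insert 0 I)ᶜ : Set F).ncard = q - 1 - I.ncard := by
    rw [Set.ncard_compl, Set.ncard_insert_of_notMem hI, Nat.card_eq_fintype_card, hcF]; omega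
  have hcountJ : (insert (Jinf K) {W | ∃ k : K, W = J K k} ∩ AndreSpread F K q I).ncard
      = 2 + (q - 1 - I.ncard) * (q + 1) := by
    rw [hrangeJ, ncard_insert_range_inter J_injective (fun ⟨k, hk⟩ => Jinf_ne_J k hk.symm)
      Jinf_mem_andreSpread, preimage_J_andreSpread hx, Set.ncard_insert_of_notMem (by simp),
      ncard_norm_preimage_of_card_sq hcF hcK (by simp), hcompl]
    ring
  have hcountJq : (insert (Jinf K) {W | ∃ k : K, W = Jq K q k} ∩ AndreSpread F K q I).ncard
      = 2 + I.ncard * (q + 1) := by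
    rw [hrangeJq, ncard_insert_range_inter Jq_injective
      (fun ⟨k, hk⟩ => Jinf_ne_Jq (by omega) k hk.symm) Jinf_mem_andreSpread,
      preimage_Jq_andreSpread (by omega) hx, Set.ncard_insert_of_notMem (by simpa using hI),
      ncard_norm_preimage_of_card_sq hcF hcK hI]
    ring
  refine ⟨hcountJ, hcountJq, ?_, ?_⟩ <;>
    nlinarith [Nat.sub_add_cancel (show I.ncard ≤ q - 1 by omega)]

theorem stmt_8
    (q : ℕ) (hq : 5 ≤ q) (hqp : IsPrimePow q)
    (F K : Type) [Field F] [Field K] [Algebra F K] [Fintype F] [Fintype K]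
    (hcF : Fintype.card F = q) (hcK : Fintype.card K = q ^ 2)
    (I : Set F) (hIss : I ⊆ {f : F | f ≠ 0})
    (hI2 : 2 ≤ I.ncard) (hIhalf : 2 * I.ncard ≤ q - 1) :
    ((insert (Jinf K) {W | ∃ k : K, W = J K k} ∩ AndreSpread F K q I).ncard
        = 2 + (q - 1 - I.ncard) * (q + 1)) ∧
    ((insert (Jinf K) {W | ∃ k : K, W = Jq K q k} ∩ AndreSpread F K q I).ncard
        = 2 + I.ncard * (q + 1)) ∧
    2 * q + 2 < 2 + (q - 1 - I.ncard) * (q + 1) ∧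
    2 * q + 2 < 2 + I.ncard * (q + 1) :=
  stmt_8_general q F K hcF hcK I hIss hI2 hIhalf
end

section
/- Assume n > 1. Let I : F∖{0} → Gal(K/F) be an indicator function and let A_I be the associated André spread. For every σ ∈ Gal(K/F), letting S^σ = {J(∞)} ∪ {J^σ(k) : k ∈ K}, the number of subspaces belonging to both S^σ and A_I equals 2 + m·(q^{n+1} − 1)/(q − 1), where m is the number of f ∈ F∖{0} with I(f) = σ. In particular, S^σ and A_I share either exactly two subspaces (when m = 0) or more than q² subspaces (when m ≥ 1). -/
/-- J^σ(k) = {(k·σ(x), x) : x ∈ K} -/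
def JJ {K : Type} [Field K] (σ : K → K) (k : K) : Set (K × K) := {p | p.1 = k * σ p.2}

/-- The André spread A_I associated to an indicator function I : F∖{0} → Gal(K/F). -/
def AndreSpreadHD (F K : Type) [Field F] [Field K] [Algebra F K]
    (I : {f : F // f ≠ 0} → (K ≃ₐ[F] K)) : Set (Set (K × K)) :=
  {Jinf K, J K 0}
    ∪ {W | ∃ k : K, k ≠ 0 ∧
        ∃ h : Algebra.norm F k ≠ 0, W = JJ (⇑(I ⟨Algebra.norm F k, h⟩)) k}

/-!
A component `J^τ(k)` determines its slope `k` (it contains `(k, 1)`) and, for `k ≠ 0`, also `τ`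
(it contains `(k τ(x), x)`). Hence the components of `S^σ` lying in `A_I` are `J(∞)`, `J(0)` and
the `J^σ(k)` with `N(k) ∈ I⁻¹(σ)`. The norm `Kˣ → Fˣ` is a surjective homomorphism, so each of
its fibres is a coset of the kernel and has `(q^{n+1} - 1)/(q - 1) ≥ 1 + q + q²` elements.
-/

theorem MonoidHom.card_fiber_mul_card_of_surjective {G H : Type*} [Group G] [Group H]
    {f : G →* H} (hf : Function.Surjective f) (h : H) :
    Nat.card (f ⁻¹' {h}) * Nat.card H = Nat.card G := by
  rw [Nat.card_congr (f.fiberEquivKerOfSurjective hf h),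
    ← Nat.card_congr (QuotientGroup.quotientKerEquivOfSurjective f hf).toEquiv]
  exact f.ker.card_mul_index

theorem Set.ncard_preimage_of_forall_ncard_fiber_eq {α β : Type*} [Finite α] {g : α → β}
    {s : Set β} (hs : s.Finite) {d : ℕ} (hd : ∀ b ∈ s, {a | g a = b}.ncard = d) :
    (g ⁻¹' s).ncard = s.ncard * d := by
  lift s to Finset β using hs
  rw [← Nat.card_coe_set_eq, Finset.card_preimage_eq_sum_card_image_eq fun _ _ ↦ Set.toFinite _,
    Set.ncard_coe_finset, ← smul_eq_mul, ← Finset.sum_const]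
  exact Finset.sum_congr rfl hd

theorem FiniteField.ncard_norm_fiber (F : Type*) {K : Type*} [Field F] [Field K] [Algebra F K]
    [Finite K] {f : F} (hf : f ≠ 0) :
    {k : K | Algebra.norm F k = f}.ncard = (Nat.card K - 1) / (Nat.card F - 1) := by
  have : Finite F := Finite.of_injective _ (algebraMap F K).injective
  let normUnits : Kˣ →* Fˣ := Units.map (Algebra.norm F)
  have hfiber :
      {k : K | Algebra.norm F k = f} = Units.val '' (normUnits ⁻¹' {Units.mk0 f hf}) := by
    ext k
    refine ⟨fun hk ↦ ?_, fun ⟨u, hu, hk⟩ ↦ hk ▸ congrArg Units.val hu⟩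
    have hk0 : k ≠ 0 := Algebra.norm_ne_zero_iff.mp (hk ▸ hf)
    exact ⟨Units.mk0 k hk0, Units.ext hk, rfl⟩
  have hcard := MonoidHom.card_fiber_mul_card_of_surjective (unitsMap_norm_surjective F K)
    (Units.mk0 f hf)
  rw [Nat.card_units, Nat.card_units] at hcard
  rw [hfiber, Set.ncard_image_of_injective _ Units.val_injective, ← Nat.card_coe_set_eq, ← hcard,
    Nat.mul_div_cancel _ (Nat.sub_pos_of_lt Finite.one_lt_card)]

theorem FiniteField.ncard_norm_preimage (F : Type*) {K : Type*} [Field F] [Field K]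
    [Algebra F K] [Finite K] (s : Set {f : F // f ≠ 0}) :
    (Algebra.norm F ⁻¹' (Subtype.val '' s) : Set K).ncard =
      s.ncard * ((Nat.card K - 1) / (Nat.card F - 1)) := by
  have : Finite F := Finite.of_injective _ (algebraMap F K).injective
  rw [Set.ncard_preimage_of_forall_ncard_fiber_eq (Set.toFinite _),
    Set.ncard_image_of_injective _ Subtype.val_injective]
  rintro _ ⟨f, -, rfl⟩
  exact ncard_norm_fiber F f.2

section Components

variable {K : Type} [Field K]

theorem J_zero_eq_JJ_zero (σ : K → K) : J K 0 = JJ σ 0 := by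
  ext p
  simp [J, JJ]

theorem slope_eq_of_JJ_eq {σ τ : K → K} (hσ : σ 1 = 1) (hτ : τ 1 = 1) {k k' : K}
    (h : JJ σ k = JJ τ k') : k = k' := by
  have : (k, 1) ∈ JJ τ k' := h ▸ show k = k * σ 1 by rw [hσ, mul_one]
  simpa [JJ, hτ] using this

theorem JJ_injective {σ : K → K} (hσ : σ 1 = 1) : Function.Injective (JJ σ) :=
  fun _ _ h ↦ slope_eq_of_JJ_eq hσ hσ h

theorem map_eq_of_JJ_eq {σ τ : K → K} {k : K} (hk : k ≠ 0) (h : JJ σ k = JJ τ k) : σ = τ := by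
  funext x
  have : (k * σ x, x) ∈ JJ τ k := h ▸ rfl
  exact mul_left_cancel₀ hk this

theorem Jinf_ne_JJ {σ : K → K} (hσ : σ 0 = 0) (k : K) : Jinf K ≠ JJ σ k := by
  intro h
  have : ((1 : K), (0 : K)) ∈ JJ σ k := h ▸ rfl
  simp [JJ, hσ] at this

end Components

section AndreSpread

variable (F K : Type) [Field F] [Field K] [Algebra F K] (I : {f : F // f ≠ 0} → (K ≃ₐ[F] K))

theorem insert_Jinf_inter_andreSpreadHD [FiniteDimensional F K] (σ : K ≃ₐ[F] K) :
    insert (Jinf K) {W | ∃ k : K, W = JJ (⇑σ) k} ∩ AndreSpreadHD F K I =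
      insert (Jinf K) (JJ σ '' insert 0 (Algebra.norm F ⁻¹' (Subtype.val '' {f | I f = σ}))) := by
  ext W
  constructor
  · rintro ⟨rfl | ⟨k, rfl⟩, hW⟩
    · exact Set.mem_insert _ _
    refine Set.mem_insert_of_mem _ ⟨k, ?_, rfl⟩
    rcases hW with (h | h) | ⟨k', hk', _, h⟩
    · exact absurd h.symm (Jinf_ne_JJ (map_zero σ) k)
    · rw [Set.mem_singleton_iff, J_zero_eq_JJ_zero σ] at h
      exact Or.inl (JJ_injective (map_one σ) h)
    · obtain rfl := slope_eq_of_JJ_eq (map_one σ) (map_one _) h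
      exact Or.inr ⟨_, DFunLike.coe_injective (map_eq_of_JJ_eq hk' h).symm, rfl⟩
  · rintro (rfl | ⟨k, rfl | ⟨f, hf, hfk⟩, rfl⟩)
    · exact ⟨Set.mem_insert _ _, Or.inl (Or.inl rfl)⟩
    · exact ⟨Set.mem_insert_of_mem _ ⟨0, rfl⟩, Or.inl (Or.inr (J_zero_eq_JJ_zero σ).symm)⟩
    · have hk : Algebra.norm F k ≠ 0 := hfk ▸ f.2
      refine ⟨Set.mem_insert_of_mem _ ⟨k, rfl⟩,
        Or.inr ⟨k, Algebra.norm_ne_zero_iff.mp hk, hk, ?_⟩⟩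
      rw [← hf, (Subtype.ext hfk : f = ⟨_, hk⟩)]

theorem ncard_insert_Jinf_inter_andreSpreadHD [Finite K] (σ : K ≃ₐ[F] K) :
    (insert (Jinf K) {W | ∃ k : K, W = JJ (⇑σ) k} ∩ AndreSpreadHD F K I).ncard =
      2 + {f | I f = σ}.ncard * ((Nat.card K - 1) / (Nat.card F - 1)) := by
  have : Finite F := Finite.of_injective _ (algebraMap F K).injective
  have : FiniteDimensional F K := Module.Finite.of_finite
  have hJinf : Jinf K ∉ JJ σ '' insert 0 (Algebra.norm F ⁻¹' (Subtype.val '' {f | I f = σ})) :=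
    fun ⟨k, _, h⟩ ↦ Jinf_ne_JJ (map_zero σ) k h.symm
  have hzero : (0 : K) ∉ Algebra.norm F ⁻¹' (Subtype.val '' {f | I f = σ}) :=
    fun ⟨f, _, hf⟩ ↦ f.2 (hf.trans (Algebra.norm_zero (R := F)))
  rw [insert_Jinf_inter_andreSpreadHD, Set.ncard_insert_of_notMem hJinf (Set.toFinite _),
    Set.ncard_image_of_injective _ (JJ_injective (map_one σ)),
    Set.ncard_insert_of_notMem hzero (Set.toFinite _), FiniteField.ncard_norm_preimage]
  omega

end AndreSpread

theorem stmt_9_general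
    (q n : ℕ) (hq : 2 < q) (hn : 1 < n)
    (F K : Type) [Field F] [Field K] [Algebra F K] [Fintype F] [Fintype K]
    (hcF : Fintype.card F = q) (hcK : Fintype.card K = q ^ (n + 1))
    (I : {f : F // f ≠ 0} → (K ≃ₐ[F] K)) :
    ∀ σ : K ≃ₐ[F] K,
      ((insert (Jinf K) {W | ∃ k : K, W = JJ (⇑σ) k} ∩ AndreSpreadHD F K I).ncard
          = 2 + {f : {f : F // f ≠ 0} | I f = σ}.ncard * ((q ^ (n + 1) - 1) / (q - 1))) ∧
      ({f : {f : F // f ≠ 0} | I f = σ}.ncard = 0 →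
        (insert (Jinf K) {W | ∃ k : K, W = JJ (⇑σ) k} ∩ AndreSpreadHD F K I).ncard = 2) ∧
      (1 ≤ {f : {f : F // f ≠ 0} | I f = σ}.ncard →
        q ^ 2 < (insert (Jinf K) {W | ∃ k : K, W = JJ (⇑σ) k} ∩ AndreSpreadHD F K I).ncard) := by
  intro σ
  have hcount := ncard_insert_Jinf_inter_andreSpreadHD F K I σ
  rw [Nat.card_eq_fintype_card, Nat.card_eq_fintype_card, hcF, hcK] at hcount
  have hsq : q ^ 2 ≤ (q ^ (n + 1) - 1) / (q - 1) := by
    rw [← Nat.geomSum_eq hq.le]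
    exact Finset.single_le_sum (f := (q ^ ·)) (fun _ _ ↦ Nat.zero_le _)
      (Finset.mem_range.mpr (by omega))
  refine ⟨hcount, fun h0 ↦ by simp [hcount, h0], fun h1 ↦ ?_⟩
  rw [hcount]
  nlinarith

theorem stmt_9
    (q n : ℕ) (hq : 2 < q) (hqp : IsPrimePow q) (hn : 1 < n)
    (F K : Type) [Field F] [Field K] [Algebra F K] [Fintype F] [Fintype K]
    (hcF : Fintype.card F = q) (hcK : Fintype.card K = q ^ (n + 1))
    (I : {f : F // f ≠ 0} → (K ≃ₐ[F] K)) :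
    ∀ σ : K ≃ₐ[F] K,
      ((insert (Jinf K) {W | ∃ k : K, W = JJ (⇑σ) k} ∩ AndreSpreadHD F K I).ncard
          = 2 + {f : {f : F // f ≠ 0} | I f = σ}.ncard * ((q ^ (n + 1) - 1) / (q - 1))) ∧
      ({f : {f : F // f ≠ 0} | I f = σ}.ncard = 0 →
        (insert (Jinf K) {W | ∃ k : K, W = JJ (⇑σ) k} ∩ AndreSpreadHD F K I).ncard = 2) ∧
      (1 ≤ {f : {f : F // f ≠ 0} | I f = σ}.ncard →
        q ^ 2 < (insert (Jinf K) {W | ∃ k : K, W = JJ (⇑σ) k} ∩ AndreSpreadHD F K I).ncard) :=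
  stmt_9_general q n hq hn F K hcF hcK I
end

section
/- Let ψ : V → V be a bijective τ-semilinear map over F, for some field automorphism τ of F, such that ψ(J(∞)) = J(∞) and ψ(J(k)) = J(k) for every k ∈ K. Then there exists c ∈ K∖{0} such that ψ(x, y) = (c·x, c·y) for all x, y ∈ K. -/
section SpreadInvariant

variable {K : Type} [Field K]

theorem apply_eq_apply_fst_add_apply_snd (ψ : K × K →+ K × K) (x y : K) :
    ψ (x, y) = ψ (x, 0) + ψ (0, y) := by
  rw [← map_add, Prod.mk_add_mk, add_zero, zero_add]

variable {ψ : K × K →+ K × K}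

theorem snd_apply_mk_zero (hinf : Set.MapsTo ψ (Jinf K) (Jinf K)) (x : K) :
    (ψ (x, 0)).2 = 0 :=
  hinf (show (x, (0 : K)) ∈ Jinf K from rfl)

theorem fst_apply_zero_mk (h0 : Set.MapsTo ψ (J K 0) (J K 0)) (y : K) :
    (ψ (0, y)).1 = 0 := by
  simpa [J] using h0 (show ((0 : K), y) ∈ J K 0 by simp [J])

theorem fst_apply_mul_eq (hinf : Set.MapsTo ψ (Jinf K) (Jinf K))
    (hk : ∀ k : K, Set.MapsTo ψ (J K k) (J K k)) (k y : K) :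
    (ψ (k * y, 0)).1 = k * (ψ (0, y)).2 := by
  have hmem : ψ (k * y, y) ∈ J K k := hk k (show (k * y, y) ∈ J K k from rfl)
  simpa [J, apply_eq_apply_fst_add_apply_snd ψ (k * y) y, snd_apply_mk_zero hinf,
    fst_apply_zero_mk (hk 0)] using hmem

theorem apply_eq_mul_of_mapsTo (hinf : Set.MapsTo ψ (Jinf K) (Jinf K))
    (hk : ∀ k : K, Set.MapsTo ψ (J K k) (J K k)) (x y : K) :
    ψ (x, y) = ((ψ (0, 1)).2 * x, (ψ (0, 1)).2 * y) := by
  have hfst : ∀ x : K, (ψ (x, 0)).1 = (ψ (0, 1)).2 * x := fun x => by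
    simpa [mul_comm] using fst_apply_mul_eq hinf hk x 1
  have hsnd : (ψ (0, y)).2 = (ψ (0, 1)).2 * y := by
    simpa [hfst] using (fst_apply_mul_eq hinf hk 1 y).symm
  rw [apply_eq_apply_fst_add_apply_snd ψ x y]
  ext <;> simp [hfst, hsnd, snd_apply_mk_zero hinf, fst_apply_zero_mk (hk 0)]

end SpreadInvariant

theorem stmt_11_general
    (K : Type) [Field K]
    (ψ : K × K → K × K)
    (hadd : ∀ u v : K × K, ψ (u + v) = ψ u + ψ v)
    (hinf : ψ '' Jinf K = Jinf K)
    (hk : ∀ k : K, ψ '' J K k = J K k) :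
    ∃ c : K, c ≠ 0 ∧ ∀ x y : K, ψ (x, y) = (c * x, c * y) := by
  let φ : K × K →+ K × K := AddMonoidHom.mk' ψ hadd
  have hφ : ∀ x y : K, φ (x, y) = ((φ (0, 1)).2 * x, (φ (0, 1)).2 * y) :=
    apply_eq_mul_of_mapsTo ((Set.mapsTo_image ψ _).mono_right hinf.le)
      (fun k => (Set.mapsTo_image ψ _).mono_right (hk k).le)
  refine ⟨(φ (0, 1)).2, ?_, hφ⟩
  obtain ⟨⟨x, y⟩, -, hxy⟩ := hinf.ge (show ((1 : K), (0 : K)) ∈ Jinf K from rfl)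
  exact left_ne_zero_of_mul_eq_one (congrArg Prod.fst ((hφ x y).symm.trans hxy))

theorem stmt_11
    (q n : ℕ) (hq : 2 < q) (hqp : IsPrimePow q) (hn : 1 ≤ n)
    (F K : Type) [Field F] [Field K] [Algebra F K] [Fintype F] [Fintype K]
    (hcF : Fintype.card F = q) (hcK : Fintype.card K = q ^ (n + 1))
    (τ : F ≃+* F) (ψ : K × K → K × K)
    (hbij : Function.Bijective ψ)
    (hadd : ∀ u v : K × K, ψ (u + v) = ψ u + ψ v)
    (hsem : ∀ (f : F) (v : K × K), ψ (f • v) = τ f • ψ v)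
    (hinf : ψ '' Jinf K = Jinf K)
    (hk : ∀ k : K, ψ '' J K k = J K k) :
    ∃ c : K, c ≠ 0 ∧ ∀ x y : K, ψ (x, y) = (c * x, c * y) :=
  stmt_11_general K ψ hadd hinf hk
end

section
/- Let a, d ∈ K∖{0}, let μ be a field automorphism of K, and let σ, ρ ∈ Gal(K/F). Define φ : V → V by φ(x, y) = (a·μ(x), σ(d·μ(y))). Then for every k ∈ K, φ maps J^ρ(k) onto J^{ρ∘σ⁻¹}(a·μ(k)·ρ(d)⁻¹). Consequently, for every f ∈ F∖{0}, φ maps the set of subspaces {J^ρ(k) : k ∈ K, N(k) = f} onto {J^{ρ∘σ⁻¹}(k′) : k′ ∈ K, N(k′) = N(a)·N(d)⁻¹·μ(f)}. -/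
/-!
The unit group of a finite field is cyclic, so every ring endomorphism acts on nonzero elements
as a power map `x ↦ x ^ m`. Hence `μ` commutes with `ρ` and with the norm; commuting `μ` past `ρ`
transports `J^ρ(k)`, and the norm condition follows from multiplicativity of the norm together
with `N(ρ d) = N(d)`.
-/

theorem image_JJ_eq {K : Type} {G : Type*} [Field K] [FunLike G K K] [RingHomClass G K K]
    (a d : K) (hd : d ≠ 0) (μ : K ≃+* K) (σ : K ≃ K) (ρ : G)
    (hμρ : ∀ x, μ (ρ x) = ρ (μ x)) (k : K) :
    (fun p : K × K => (a * μ p.1, σ (d * μ p.2))) '' JJ ρ k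
      = JJ (ρ ∘ σ.symm) (a * μ k * (ρ d)⁻¹) := by
  have hρd : ρ d ≠ 0 := (map_ne_zero ρ).mpr hd
  ext ⟨u, v⟩
  simp only [JJ, Set.mem_image, Set.mem_ofPred_eq, Prod.mk.injEq, Prod.exists,
    Function.comp_apply]
  constructor
  · rintro ⟨_, x, rfl, rfl, rfl⟩
    rw [σ.symm_apply_apply, map_mul, map_mul, hμρ]
    field_simp
  · rintro rfl
    set x := μ.symm (d⁻¹ * σ.symm v)
    have hμx : d * μ x = σ.symm v := by simp [x, hd]
    refine ⟨_, x, rfl, ?_, by rw [hμx, σ.apply_symm_apply]⟩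
    rw [map_mul, hμρ, ← hμx, map_mul]
    field_simp

namespace FiniteField

variable {K G H : Type*} [Field K] [Finite K]

theorem exists_zpow_eq [FunLike G K K] [MonoidWithZeroHomClass G K K] (μ : G) :
    ∃ m : ℤ, ∀ x : K, x ≠ 0 → μ x = x ^ m := by
  obtain ⟨m, hm⟩ := (Units.map (μ : K →* K)).map_cyclic
  exact ⟨m, fun x hx => by simpa using congrArg Units.val (hm (Units.mk0 x hx))⟩

theorem map_map_comm [FunLike G K K] [MonoidWithZeroHomClass G K K]
    [FunLike H K K] [MonoidWithZeroHomClass H K K] (μ : G) (ρ : H) (x : K) :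
    μ (ρ x) = ρ (μ x) := by
  rcases eq_or_ne x 0 with rfl | hx
  · simp
  obtain ⟨m, hm⟩ := exists_zpow_eq μ
  rw [hm x hx, hm _ ((map_ne_zero ρ).mpr hx), map_zpow₀]

theorem algebraMap_norm_map {F : Type*} [Field F] [Algebra F K] [FunLike G K K]
    [MonoidWithZeroHomClass G K K] (μ : G) (x : K) :
    algebraMap F K (Algebra.norm F (μ x)) = μ (algebraMap F K (Algebra.norm F x)) := by
  rcases eq_or_ne x 0 with rfl | hx
  · simp
  obtain ⟨m, hm⟩ := exists_zpow_eq μ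
  have hNx : algebraMap F K (Algebra.norm F x) ≠ 0 := by
    simpa using (Algebra.norm_ne_zero_iff (R := F)).mpr hx
  rw [hm x hx, hm _ hNx, Algebra.norm_zpow, map_zpow₀]

theorem algebraMap_norm_mul_map_mul_inv {F : Type*} [Field F] [Algebra F K] (a d k : K)
    (μ : K ≃+* K) (ρ : K ≃ₐ[F] K) :
    algebraMap F K (Algebra.norm F (a * μ k * (ρ d)⁻¹))
      = algebraMap F K (Algebra.norm F a * (Algebra.norm F d)⁻¹)
          * μ (algebraMap F K (Algebra.norm F k)) := by
  simp only [map_mul, Algebra.norm_inv, Algebra.norm_eq_of_algEquiv, map_inv₀,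
    algebraMap_norm_map]
  ring

end FiniteField

theorem stmt_12_general
    (F K : Type) [Field F] [Field K] [Algebra F K] [Fintype K]
    (a d : K) (ha : a ≠ 0) (hd : d ≠ 0)
    (μ : K ≃+* K) (σ ρ : K ≃ₐ[F] K)
    (φ : K × K → K × K)
    (hφ : ∀ x y : K, φ (x, y) = (a * μ x, σ (d * μ y))) :
    (∀ k : K, φ '' JJ (⇑ρ) k = JJ (⇑(σ.symm.trans ρ)) (a * μ k * (ρ d)⁻¹)) ∧
    ∀ f : F, f ≠ 0 →
      (fun W => φ '' W) '' {W | ∃ k : K, Algebra.norm F k = f ∧ W = JJ (⇑ρ) k}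
        = {W | ∃ k' : K,
            algebraMap F K (Algebra.norm F k')
              = algebraMap F K (Algebra.norm F a * (Algebra.norm F d)⁻¹)
                  * μ (algebraMap F K f) ∧
            W = JJ (⇑(σ.symm.trans ρ)) k'} := by
  have hφ' : φ = fun p => (a * μ p.1, σ (d * μ p.2)) := funext fun p => hφ p.1 p.2
  have himage (k : K) : φ '' JJ ρ k = JJ (σ.symm.trans ρ) (a * μ k * (ρ d)⁻¹) := by
    rw [hφ']
    exact image_JJ_eq a d hd μ σ.toEquiv ρ (FiniteField.map_map_comm μ ρ) k
  have hsurj : Function.Surjective fun k => a * μ k * (ρ d)⁻¹ := fun k' =>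
    ⟨μ.symm (k' * ρ d * a⁻¹), by
      simp only [μ.apply_symm_apply]
      field_simp [(map_ne_zero ρ).mpr hd]⟩
  have hnorm (k : K) (f : F) :
      algebraMap F K (Algebra.norm F (a * μ k * (ρ d)⁻¹))
          = algebraMap F K (Algebra.norm F a * (Algebra.norm F d)⁻¹) * μ (algebraMap F K f)
        ↔ Algebra.norm F k = f := by
    have hNad : algebraMap F K (Algebra.norm F a * (Algebra.norm F d)⁻¹) ≠ 0 := by
      simp [ha, hd]
    rw [FiniteField.algebraMap_norm_mul_map_mul_inv, mul_right_inj' hNad,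
      μ.injective.eq_iff, (algebraMap F K).injective.eq_iff]
  refine ⟨himage, fun f _ => ?_⟩
  ext W
  simp only [Set.mem_image, Set.mem_ofPred_eq]
  constructor
  · rintro ⟨_, ⟨k, hk, rfl⟩, rfl⟩
    exact ⟨_, (hnorm k f).2 hk, himage k⟩
  · rintro ⟨_, hk', rfl⟩
    obtain ⟨k, rfl⟩ := hsurj ‹_›
    exact ⟨_, ⟨k, (hnorm k f).1 hk', rfl⟩, himage k⟩

theorem stmt_12
    (q n : ℕ) (hq : 2 < q) (hqp : IsPrimePow q) (hn : 1 ≤ n)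
    (F K : Type) [Field F] [Field K] [Algebra F K] [Fintype F] [Fintype K]
    (hcF : Fintype.card F = q) (hcK : Fintype.card K = q ^ (n + 1))
    (a d : K) (ha : a ≠ 0) (hd : d ≠ 0)
    (μ : K ≃+* K) (σ ρ : K ≃ₐ[F] K)
    (φ : K × K → K × K)
    (hφ : ∀ x y : K, φ (x, y) = (a * μ x, σ (d * μ y))) :
    (∀ k : K, φ '' JJ (⇑ρ) k = JJ (⇑(σ.symm.trans ρ)) (a * μ k * (ρ d)⁻¹)) ∧
    ∀ f : F, f ≠ 0 →
      (fun W => φ '' W) '' {W | ∃ k : K, Algebra.norm F k = f ∧ W = JJ (⇑ρ) k}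
        = {W | ∃ k' : K,
            algebraMap F K (Algebra.norm F k')
              = algebraMap F K (Algebra.norm F a * (Algebra.norm F d)⁻¹)
                  * μ (algebraMap F K f) ∧
            W = JJ (⇑(σ.symm.trans ρ)) k'} :=
  stmt_12_general F K a d ha hd μ σ ρ φ hφ
end

section
/- Let b, c ∈ K∖{0}, let μ be a field automorphism of K, and let σ, ρ ∈ Gal(K/F). Define φ : V → V by φ(x, y) = (b·μ(y), σ(c·μ(x))). Then for every k ∈ K∖{0}, φ maps J^ρ(k) onto J^{ρ⁻¹∘σ⁻¹}(b·(ρ⁻¹(c)·ρ⁻¹(μ(k)))⁻¹). Consequently, for every f ∈ F∖{0}, φ maps the set of subspaces {J^ρ(k) : k ∈ K, N(k) = f} onto {J^{ρ⁻¹∘σ⁻¹}(k′) : k′ ∈ K, N(k′) = N(b)·N(c)⁻¹·μ(f)⁻¹}. -/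
theorem RingEquiv.apply_apply_comm_of_finite {K : Type*} [Field K] [Finite K] (μ ν : K ≃+* K)
    (x : K) : μ (ν x) = ν (μ x) := by
  obtain ⟨p, _⟩ := CharP.exists K
  have : Fact p.Prime := ⟨CharP.char_is_prime K p⟩
  let := ZMod.algebra K p
  let toGal (e : K ≃+* K) : K ≃ₐ[ZMod p] K :=
    AlgEquiv.ofRingEquiv (f := e) <| RingHom.congr_fun <|
      RingHom.ext_zmod ((e : K →+* K).comp (algebraMap _ K)) (algebraMap _ K)
  let := IsCyclic.commGroup (α := K ≃ₐ[ZMod p] K)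
  exact congr($(mul_comm (toGal μ) (toGal ν)) x)


theorem image_JJ {K : Type} [Field K] {b c k : K} (hc : c ≠ 0) (hk : k ≠ 0)
    (μ σ ρ : K ≃+* K) (hμρ : ∀ x, μ (ρ x) = ρ (μ x)) :
    (fun p : K × K => (b * μ p.2, σ (c * μ p.1))) '' JJ ρ k
      = JJ (ρ.symm ∘ σ.symm) (b * (ρ.symm c * ρ.symm (μ k))⁻¹) := by
  have hc' : ρ.symm c ≠ 0 := by simpa using hc
  have hμk : μ k ≠ 0 := by simpa using hk
  have hk' : ρ.symm (μ k) ≠ 0 := by simpa using hμk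
  ext ⟨u, v⟩
  simp only [JJ, Set.mem_image, Set.mem_ofPred_eq, Prod.exists, Prod.mk.injEq, Function.comp_apply]
  constructor
  · rintro ⟨_, y, rfl, rfl, rfl⟩
    have hρμ : ρ.symm (μ (ρ y)) = μ y := by rw [hμρ, RingEquiv.symm_apply_apply]
    simp only [RingEquiv.symm_apply_apply, map_mul, hρμ]
    field_simp
  · rintro rfl
    set y := μ.symm ((ρ.symm c * ρ.symm (μ k))⁻¹ * ρ.symm (σ.symm v))
    refine ⟨k * ρ y, y, rfl, ?_, ?_⟩
    · simp only [y, RingEquiv.apply_symm_apply]; ring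
    · have hσy : c * μ (k * ρ y) = σ.symm v := by
        rw [map_mul μ, hμρ, RingEquiv.apply_symm_apply, map_mul ρ, map_inv₀, map_mul ρ]
        simp only [RingEquiv.apply_symm_apply]
        field_simp
      rw [hσy, RingEquiv.apply_symm_apply]

section Norm

variable {F K : Type*} [Field F] [Field K] [Algebra F K] [Finite K]

theorem Algebra.algebraMap_norm_ringEquiv (μ : K ≃+* K) (x : K) :
    algebraMap F K (Algebra.norm F (μ x)) = μ (algebraMap F K (Algebra.norm F x)) := by
  have : Module.Finite F K := .of_finite
  rw [Algebra.norm_eq_prod_automorphisms, Algebra.norm_eq_prod_automorphisms, map_prod]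
  exact Finset.prod_congr rfl fun τ _ => (μ.apply_apply_comm_of_finite τ.toRingEquiv x).symm

theorem algebraMap_norm_mul_inv_mul (b c k : K) (μ : K ≃+* K) (ρ : K ≃ₐ[F] K) :
    algebraMap F K (Algebra.norm F (b * (ρ.symm c * ρ.symm (μ k))⁻¹))
      = algebraMap F K (Algebra.norm F b * (Algebra.norm F c)⁻¹)
          * (μ (algebraMap F K (Algebra.norm F k)))⁻¹ := by
  have : Module.Finite F K := .of_finite
  simp only [map_mul, Algebra.norm_inv, Algebra.norm_eq_of_algEquiv, map_inv₀,
    Algebra.algebraMap_norm_ringEquiv]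
  ring

theorem image_mul_inv_mul_norm_fiber {b c : K} (hb : b ≠ 0) (hc : c ≠ 0) (μ : K ≃+* K)
    (ρ : K ≃ₐ[F] K) (f : F) :
    (fun k => b * (ρ.symm c * ρ.symm (μ k))⁻¹) '' {k | Algebra.norm F k = f}
      = {k' | algebraMap F K (Algebra.norm F k')
          = algebraMap F K (Algebra.norm F b * (Algebra.norm F c)⁻¹)
            * (μ (algebraMap F K f))⁻¹} := by
  have : Module.Finite F K := .of_finite
  have hc' : ρ.symm c ≠ 0 := by simpa using hc
  have hbc : algebraMap F K (Algebra.norm F b * (Algebra.norm F c)⁻¹) ≠ 0 := by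
    simp [hb, hc]
  let e : Equiv.Perm K := μ.toEquiv.trans <| ρ.symm.toEquiv.trans <|
    (Equiv.mulLeft₀ _ hc').trans <| (Equiv.inv K).trans (Equiv.mulLeft₀ b hb)
  have hfiber : {k | Algebra.norm F k = f} = e ⁻¹' {k' | algebraMap F K (Algebra.norm F k')
      = algebraMap F K (Algebra.norm F b * (Algebra.norm F c)⁻¹) * (μ (algebraMap F K f))⁻¹} := by
    ext k
    simp only [Set.mem_ofPred_eq, Set.mem_preimage]
    rw [show e k = b * (ρ.symm c * ρ.symm (μ k))⁻¹ from rfl, algebraMap_norm_mul_inv_mul,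
      mul_right_inj' hbc, inv_inj, μ.injective.eq_iff, (algebraMap F K).injective.eq_iff]
  exact hfiber ▸ e.image_preimage _

end Norm

theorem stmt_13_general
    (F K : Type) [Field F] [Field K] [Algebra F K] [Fintype K]
    (b c : K) (hb : b ≠ 0) (hc : c ≠ 0)
    (μ : K ≃+* K) (σ ρ : K ≃ₐ[F] K)
    (φ : K × K → K × K)
    (hφ : ∀ x y : K, φ (x, y) = (b * μ y, σ (c * μ x))) :
    (∀ k : K, k ≠ 0 →
      φ '' JJ (⇑ρ) k
        = JJ (⇑(σ.symm.trans ρ.symm)) (b * (ρ.symm c * ρ.symm (μ k))⁻¹)) ∧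
    ∀ f : F, f ≠ 0 →
      (fun W => φ '' W) '' {W | ∃ k : K, Algebra.norm F k = f ∧ W = JJ (⇑ρ) k}
        = {W | ∃ k' : K,
            algebraMap F K (Algebra.norm F k')
              = algebraMap F K (Algebra.norm F b * (Algebra.norm F c)⁻¹)
                  * (μ (algebraMap F K f))⁻¹ ∧
            W = JJ (⇑(σ.symm.trans ρ.symm)) k'} := by
  obtain rfl : φ = fun p => (b * μ p.2, σ (c * μ p.1)) := funext fun p => hφ p.1 p.2
  have hJ := fun k (hk : k ≠ 0) => image_JJ (b := b) hc hk μ σ.toRingEquiv ρ.toRingEquiv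
    (μ.apply_apply_comm_of_finite ρ.toRingEquiv)
  refine ⟨hJ, fun f hf => ?_⟩
  have setOf_eq_image : ∀ (J : K → Set (K × K)) (P : K → Prop),
      {W | ∃ k, P k ∧ W = J k} = J '' {k | P k} := fun J P => by
    ext; simp [eq_comm]
  rw [setOf_eq_image, setOf_eq_image, Set.image_image, ← image_mul_inv_mul_norm_fiber hb hc μ ρ f,
    Set.image_image]
  refine Set.image_congr fun k (hk : Algebra.norm F k = f) => hJ k ?_
  rintro rfl
  exact hf (by simpa using hk.symm)

theorem stmt_13
    (q n : ℕ) (hq : 2 < q) (hqp : IsPrimePow q) (hn : 1 ≤ n)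
    (F K : Type) [Field F] [Field K] [Algebra F K] [Fintype F] [Fintype K]
    (hcF : Fintype.card F = q) (hcK : Fintype.card K = q ^ (n + 1))
    (b c : K) (hb : b ≠ 0) (hc : c ≠ 0)
    (μ : K ≃+* K) (σ ρ : K ≃ₐ[F] K)
    (φ : K × K → K × K)
    (hφ : ∀ x y : K, φ (x, y) = (b * μ y, σ (c * μ x))) :
    (∀ k : K, k ≠ 0 →
      φ '' JJ (⇑ρ) k
        = JJ (⇑(σ.symm.trans ρ.symm)) (b * (ρ.symm c * ρ.symm (μ k))⁻¹)) ∧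
    ∀ f : F, f ≠ 0 →
      (fun W => φ '' W) '' {W | ∃ k : K, Algebra.norm F k = f ∧ W = JJ (⇑ρ) k}
        = {W | ∃ k' : K,
            algebraMap F K (Algebra.norm F k')
              = algebraMap F K (Algebra.norm F b * (Algebra.norm F c)⁻¹)
                  * (μ (algebraMap F K f))⁻¹ ∧
            W = JJ (⇑(σ.symm.trans ρ.symm)) k'} :=
  stmt_13_general F K b c hb hc μ σ ρ φ hφ
end

section
/- For every f ∈ F∖{0} and every σ ∈ Gal(K/F), the union of the subspaces J^σ(k) over all k ∈ K with N(k) = f equals {(0,0)} ∪ {(u, v) ∈ K × K : v ≠ 0 and N(u) = f·N(v)}. In particular, this union of point sets is independent of the choice of σ, so for every σ, ρ ∈ Gal(K/F), ⋃_{N(k)=f} J^σ(k) = ⋃_{N(k)=f} J^ρ(k). -/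
theorem iUnion_JJ_norm_fiber_eq {F K : Type} [Field F] [Field K] [Algebra F K]
    [FiniteDimensional F K] {f : F} (hf : ∃ k : K, Algebra.norm F k = f) (σ : K ≃ₐ[F] K) :
    (⋃ k ∈ {k : K | Algebra.norm F k = f}, JJ (⇑σ) k)
      = {(0, 0)} ∪ {p : K × K | p.2 ≠ 0 ∧ Algebra.norm F p.1 = f * Algebra.norm F p.2} := by
  ext ⟨u, v⟩
  simp only [Set.mem_iUnion, Set.mem_ofPred_eq, JJ, Set.mem_union, Set.mem_singleton_iff,
    Prod.mk.injEq, exists_prop]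
  constructor
  · rintro ⟨k, hk, rfl⟩
    by_cases hv : v = 0
    · simp [hv]
    · exact Or.inr ⟨hv, by rw [map_mul, hk, Algebra.norm_eq_of_algEquiv]⟩
  · rintro (⟨rfl, rfl⟩ | ⟨hv, huv⟩)
    · obtain ⟨k, hk⟩ := hf
      exact ⟨k, hk, by simp⟩
    · have hσv : σ v ≠ 0 := by simpa using hv
      refine ⟨u * (σ v)⁻¹, ?_, (inv_mul_cancel_right₀ hσv u).symm⟩
      rw [map_mul, Algebra.norm_inv, Algebra.norm_eq_of_algEquiv, huv,
        mul_inv_cancel_right₀ (Algebra.norm_ne_zero_iff.2 hv)]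

theorem stmt_18_general
    (F K : Type) [Field F] [Field K] [Algebra F K] [Fintype K] :
    (∀ f : F, f ≠ 0 → ∀ σ : K ≃ₐ[F] K,
      (⋃ k ∈ {k : K | Algebra.norm F k = f}, JJ (⇑σ) k)
        = {(0, 0)} ∪ {p : K × K | p.2 ≠ 0 ∧ Algebra.norm F p.1 = f * Algebra.norm F p.2}) ∧
    ∀ f : F, f ≠ 0 → ∀ σ ρ : K ≃ₐ[F] K,
      (⋃ k ∈ {k : K | Algebra.norm F k = f}, JJ (⇑σ) k)
        = ⋃ k ∈ {k : K | Algebra.norm F k = f}, JJ (⇑ρ) k := by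
  have : FiniteDimensional F K := Module.Finite.of_finite
  have key (f : F) (σ : K ≃ₐ[F] K) :=
    iUnion_JJ_norm_fiber_eq (FiniteField.norm_surjective F K f) σ
  exact ⟨fun f _ σ => key f σ, fun f _ σ ρ => by rw [key f σ, key f ρ]⟩

theorem stmt_18
    (q n : ℕ) (hq : 2 < q) (hqp : IsPrimePow q) (hn : 1 ≤ n)
    (F K : Type) [Field F] [Field K] [Algebra F K] [Fintype F] [Fintype K]
    (hcF : Fintype.card F = q) (hcK : Fintype.card K = q ^ (n + 1)) :
    (∀ f : F, f ≠ 0 → ∀ σ : K ≃ₐ[F] K,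
      (⋃ k ∈ {k : K | Algebra.norm F k = f}, JJ (⇑σ) k)
        = {(0, 0)} ∪ {p : K × K | p.2 ≠ 0 ∧ Algebra.norm F p.1 = f * Algebra.norm F p.2}) ∧
    ∀ f : F, f ≠ 0 → ∀ σ ρ : K ≃ₐ[F] K,
      (⋃ k ∈ {k : K | Algebra.norm F k = f}, JJ (⇑σ) k)
        = ⋃ k ∈ {k : K | Algebra.norm F k = f}, JJ (⇑ρ) k :=
  stmt_18_general F K
end

section
/- Let I : F∖{0} → Gal(K/F) be any indicator function. Then the collection of subspaces A_I = {J(∞), J(0)} ∪ {J^{I(N(k))}(k) : k ∈ K∖{0}} partitions the nonzero vectors of V: any two distinct members of A_I intersect only in the zero vector, and every vector of V lies in some member of A_I. In particular, every nonzero vector of V lies in exactly one member of A_I. -/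
namespace AndreSpreadHD

variable {F K : Type} [Field F] [Field K] [Algebra F K] {I : {f : F // f ≠ 0} → (K ≃ₐ[F] K)}

theorem zero_mem {W : Set (K × K)} (hW : W ∈ AndreSpreadHD F K I) : (0 : K × K) ∈ W := by
  rcases hW with (rfl | rfl) | ⟨k, -, -, rfl⟩ <;> simp [Jinf, J, JJ]

theorem fst_eq_zero_iff_of_mem_JJ (σ : K ≃ₐ[F] K) {k : K} (hk : k ≠ 0) {v : K × K}
    (hv : v ∈ JJ σ k) : v.1 = 0 ↔ v.2 = 0 := by
  rw [hv]
  simp [hk]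

theorem norm_fst_of_mem_JJ (σ : K ≃ₐ[F] K) {k : K} {v : K × K} (hv : v ∈ JJ σ k) :
    Algebra.norm F v.1 = Algebra.norm F k * Algebra.norm F v.2 := by
  rw [hv, map_mul, Algebra.norm_eq_of_algEquiv]

theorem eq_Jinf_of_mem {W : Set (K × K)} (hW : W ∈ AndreSpreadHD F K I) {v : K × K}
    (hv : v ≠ 0) (hvW : v ∈ W) (hb : v.2 = 0) : W = Jinf K := by
  have ha : v.1 ≠ 0 := fun ha => hv (Prod.ext ha hb)
  rcases hW with (rfl | rfl) | ⟨k, hk, _, rfl⟩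
  · rfl
  · exact absurd (by simpa [J, hb] using hvW) ha
  · exact absurd ((fst_eq_zero_iff_of_mem_JJ _ hk hvW).mpr hb) ha

theorem eq_J_zero_of_mem {W : Set (K × K)} (hW : W ∈ AndreSpreadHD F K I) {v : K × K}
    (hvW : v ∈ W) (ha : v.1 = 0) (hb : v.2 ≠ 0) : W = J K 0 := by
  rcases hW with (rfl | rfl) | ⟨k, hk, _, rfl⟩
  · exact absurd hvW hb
  · rfl
  · exact absurd ((fst_eq_zero_iff_of_mem_JJ _ hk hvW).mp ha) hb

theorem exists_eq_JJ_of_mem {W : Set (K × K)} (hW : W ∈ AndreSpreadHD F K I) {v : K × K}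
    (hvW : v ∈ W) (ha : v.1 ≠ 0) (hb : v.2 ≠ 0) :
    ∃ k : K, ∃ h : Algebra.norm F k ≠ 0, W = JJ (I ⟨_, h⟩) k := by
  rcases hW with (rfl | rfl) | ⟨k, -, h, rfl⟩
  · exact absurd hvW hb
  · exact absurd (by simpa [J] using hvW) ha
  · exact ⟨k, h, rfl⟩

variable [Module.Finite F K]

theorem eq_of_mem_JJ_of_mem_JJ {k₁ k₂ : K} (h₁ : Algebra.norm F k₁ ≠ 0)
    (h₂ : Algebra.norm F k₂ ≠ 0) {v : K × K} (hv : v.2 ≠ 0)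
    (hv₁ : v ∈ JJ (I ⟨_, h₁⟩) k₁) (hv₂ : v ∈ JJ (I ⟨_, h₂⟩) k₂) : k₁ = k₂ := by
  have hnorm : Algebra.norm F k₁ = Algebra.norm F k₂ := by
    refine mul_right_cancel₀ (Algebra.norm_ne_zero_iff.mpr hv) ?_
    rw [← norm_fst_of_mem_JJ _ hv₁, ← norm_fst_of_mem_JJ _ hv₂]
  have hσ : I ⟨_, h₁⟩ = I ⟨_, h₂⟩ := congrArg I (Subtype.ext hnorm)
  rw [hσ] at hv₁
  exact mul_right_cancel₀ ((map_ne_zero _).mpr hv) (hv₁.symm.trans hv₂)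

theorem eq_of_mem_of_mem {W₁ W₂ : Set (K × K)} (h₁ : W₁ ∈ AndreSpreadHD F K I)
    (h₂ : W₂ ∈ AndreSpreadHD F K I) {v : K × K} (hv : v ≠ 0) (hv₁ : v ∈ W₁) (hv₂ : v ∈ W₂) :
    W₁ = W₂ := by
  by_cases hb : v.2 = 0
  · rw [eq_Jinf_of_mem h₁ hv hv₁ hb, eq_Jinf_of_mem h₂ hv hv₂ hb]
  by_cases ha : v.1 = 0
  · rw [eq_J_zero_of_mem h₁ hv₁ ha hb, eq_J_zero_of_mem h₂ hv₂ ha hb]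
  obtain ⟨k₁, hn₁, rfl⟩ := exists_eq_JJ_of_mem h₁ hv₁ ha hb
  obtain ⟨k₂, hn₂, rfl⟩ := exists_eq_JJ_of_mem h₂ hv₂ ha hb
  obtain rfl := eq_of_mem_JJ_of_mem_JJ hn₁ hn₂ hb hv₁ hv₂
  rfl

variable (I) in
theorem exists_mem (v : K × K) :
    ∃ W ∈ AndreSpreadHD F K I, v ∈ W := by
  by_cases hb : v.2 = 0
  · exact ⟨Jinf K, .inl (.inl rfl), hb⟩
  by_cases ha : v.1 = 0
  · exact ⟨J K 0, .inl (.inr rfl), by simp [J, ha]⟩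
  have hnb : Algebra.norm F v.2 ≠ 0 := Algebra.norm_ne_zero_iff.mpr hb
  have hc : Algebra.norm F v.1 / Algebra.norm F v.2 ≠ 0 :=
    div_ne_zero (Algebra.norm_ne_zero_iff.mpr ha) hnb
  set σ := I ⟨_, hc⟩
  have hσb : σ v.2 ≠ 0 := (map_ne_zero σ).mpr hb
  set k := v.1 / σ v.2
  have hvk : v ∈ JJ σ k := (div_mul_cancel₀ _ hσb).symm
  have hnk : Algebra.norm F k = Algebra.norm F v.1 / Algebra.norm F v.2 := by
    rw [eq_div_iff hnb, ← norm_fst_of_mem_JJ σ hvk]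
  have hσk : I ⟨_, hnk ▸ hc⟩ = σ := congrArg I (Subtype.ext hnk)
  exact ⟨_, .inr ⟨k, div_ne_zero ha hσb, hnk ▸ hc, rfl⟩, hσk ▸ hvk⟩

end AndreSpreadHD

theorem stmt_19_general
    (F K : Type) [Field F] [Field K] [Algebra F K] [Fintype K]
    (I : {f : F // f ≠ 0} → (K ≃ₐ[F] K)) :
    (∀ W₁ ∈ AndreSpreadHD F K I, ∀ W₂ ∈ AndreSpreadHD F K I,
      W₁ ≠ W₂ → W₁ ∩ W₂ = {(0 : K × K)}) ∧
    (∀ v : K × K, ∃ W ∈ AndreSpreadHD F K I, v ∈ W) ∧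
    ∀ v : K × K, v ≠ 0 → ∃! W, W ∈ AndreSpreadHD F K I ∧ v ∈ W := by
  have : Module.Finite F K := Module.Finite.of_finite
  refine ⟨fun W₁ h₁ W₂ h₂ hne => ?_, AndreSpreadHD.exists_mem I, fun v hv => ?_⟩
  · refine Set.eq_singleton_iff_unique_mem.mpr
      ⟨⟨AndreSpreadHD.zero_mem h₁, AndreSpreadHD.zero_mem h₂⟩, ?_⟩
    rintro v ⟨hv₁, hv₂⟩
    by_contra hv
    exact hne (AndreSpreadHD.eq_of_mem_of_mem h₁ h₂ hv hv₁ hv₂)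
  · obtain ⟨W, hW, hvW⟩ := AndreSpreadHD.exists_mem I v
    exact ⟨W, ⟨hW, hvW⟩, fun W' ⟨hW', hvW'⟩ =>
      AndreSpreadHD.eq_of_mem_of_mem hW' hW hv hvW' hvW⟩

theorem stmt_19
    (q n : ℕ) (hq : 2 < q) (hqp : IsPrimePow q) (hn : 1 ≤ n)
    (F K : Type) [Field F] [Field K] [Algebra F K] [Fintype F] [Fintype K]
    (hcF : Fintype.card F = q) (hcK : Fintype.card K = q ^ (n + 1))
    (I : {f : F // f ≠ 0} → (K ≃ₐ[F] K)) :
    (∀ W₁ ∈ AndreSpreadHD F K I, ∀ W₂ ∈ AndreSpreadHD F K I,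
      W₁ ≠ W₂ → W₁ ∩ W₂ = {(0 : K × K)}) ∧
    (∀ v : K × K, ∃ W ∈ AndreSpreadHD F K I, v ∈ W) ∧
    ∀ v : K × K, v ≠ 0 → ∃! W, W ∈ AndreSpreadHD F K I ∧ v ∈ W :=
  stmt_19_general F K I
end
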